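/- arXiv:2512.06070 — 2 statements merged into one kernel-verified Lean document; each statement's English description precedes it below -/
import Mathlib

section
/- Any Abelian subalgebra h of su(2^n) spanned by Pauli strings can be conjugated into the span of products of the single-qubit operators Z_1, ..., Z_n; consequently there exists an Abelian Lie algebra b of dimension at most n such that h is contained in the multiplicative closure M(b) of b. -/
open Matrix

noncomputable def pauli : Fin 4 → Matrix (Fin 2) (Fin 2) ℂ
  | 0 => 1
  | 1 => !![0, 1; 1, 0]
  | 2 => !![0, -Complex.I; Complex.I, 0]
  | 3 => !![1, 0; 0, -1]

noncomputable def PauliString (n : ℕ) (f : Fin n → Fin 4) :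
    Matrix (Fin n → Fin 2) (Fin n → Fin 2) ℂ :=
  fun v w => ∏ i, pauli (f i) (v i) (w i)

/-- The string `Z_{i₁} Z_{i₂} ⋯` supported on the set `s` of qubits. -/
noncomputable def Zstring (n : ℕ) (s : Finset (Fin n)) :
    Matrix (Fin n → Fin 2) (Fin n → Fin 2) ℂ :=
  PauliString n (fun i => if i ∈ s then 3 else 0)

/-- The multiplicative closure `M(b)`: the span of all products
`b_{j₁} ⋯ b_{j_r}` with `j₁ < ⋯ < j_r` of a commuting family `b`. -/
noncomputable def multClosure {N : Type*} [Fintype N] [DecidableEq N]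
    (m : ℕ) (b : Fin m → Matrix N N ℂ) : Submodule ℂ (Matrix N N ℂ) :=
  Submodule.span ℂ
    {P | ∃ s : Finset (Fin m),
      P = (((List.finRange m).filter (· ∈ s)).map b).prod}

lemma PauliString_apply (n : ℕ) (f : Fin n → Fin 4) (v w : Fin n → Fin 2) :
    PauliString n f v w = ∏ i, pauli (f i) (v i) (w i) := rfl

lemma pauli_conjTranspose (k : Fin 4) : (pauli k)ᴴ = pauli k := by
  fin_cases k <;> ext i j <;> fin_cases i <;> fin_cases j <;>
    simp [pauli, conjTranspose_apply]

lemma pauli_mul_self (k : Fin 4) : pauli k * pauli k = 1 := by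
  fin_cases k <;> ext i j <;> fin_cases i <;> fin_cases j <;>
    simp [pauli, mul_apply, Fin.sum_univ_two, one_apply, Complex.I_mul_I]

lemma pauli_zero_apply (a b : Fin 2) : pauli 0 a b = if a = b then 1 else 0 := by
  fin_cases a <;> fin_cases b <;> simp [pauli, one_apply]

lemma PauliString_mul (n : ℕ) (f g : Fin n → Fin 4) (v w : Fin n → Fin 2) :
    (PauliString n f * PauliString n g) v w =
      ∏ i, (pauli (f i) * pauli (g i)) (v i) (w i) := by
  rw [mul_apply]
  simp_rw [PauliString_apply, ← Finset.prod_mul_distrib, mul_apply,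
    Finset.prod_univ_sum, Fintype.piFinset_univ]

lemma PauliString_zero (n : ℕ) : PauliString n (fun _ => 0) = 1 := by
  funext v w
  rw [PauliString_apply]
  simp_rw [pauli_zero_apply]
  rw [Finset.prod_boole, one_apply]
  simp [funext_iff]

lemma PauliString_sq (n : ℕ) (f : Fin n → Fin 4) :
    PauliString n f * PauliString n f = 1 := by
  funext v w
  rw [PauliString_mul]
  simp_rw [pauli_mul_self]
  rw [← PauliString_zero n, PauliString_apply]
  rfl

lemma PauliString_conjTranspose (n : ℕ) (f : Fin n → Fin 4) :
    (PauliString n f)ᴴ = PauliString n f := by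
  funext v w
  rw [conjTranspose_apply, PauliString_apply, PauliString_apply, star_prod]
  apply Finset.prod_congr rfl
  intro i _
  have := congrFun (congrFun (pauli_conjTranspose (f i)) (v i)) (w i)
  simpa [conjTranspose_apply] using this

noncomputable def sgn (c : Fin 2) : ℂ := if c = 0 then 1 else -1

lemma sgn_sq (c : Fin 2) : sgn c * sgn c = 1 := by
  fin_cases c <;> simp [sgn]

lemma pauli_three_apply (a b : Fin 2) : pauli 3 a b = if a = b then sgn a else 0 := by
  fin_cases a <;> fin_cases b <;> simp [pauli, sgn]

lemma Zstring_eq_diagonal (n : ℕ) (s : Finset (Fin n)) :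
    Zstring n s = Matrix.diagonal (fun v => ∏ i ∈ s, sgn (v i)) := by
  funext v w
  rw [Zstring, PauliString_apply]
  by_cases hvw : v = w
  · subst hvw
    rw [diagonal_apply_eq]
    rw [← Finset.prod_filter_mul_prod_filter_not Finset.univ (· ∈ s)]
    have h1 : ∀ i ∈ Finset.univ.filter (· ∈ s),
        pauli (if i ∈ s then 3 else 0) (v i) (v i) = sgn (v i) := by
      intro i hi
      simp only [Finset.mem_filter] at hi
      rw [if_pos hi.2, pauli_three_apply, if_pos rfl]
    have h2 : ∀ i ∈ Finset.univ.filter (¬ · ∈ s),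
        pauli (if i ∈ s then 3 else 0) (v i) (v i) = 1 := by
      intro i hi
      simp only [Finset.mem_filter] at hi
      rw [if_neg hi.2, pauli_zero_apply, if_pos rfl]
    rw [Finset.prod_congr rfl h1, Finset.prod_congr rfl h2]
    simp
  · rw [diagonal_apply_ne _ hvw]
    obtain ⟨i, hi⟩ : ∃ i, v i ≠ w i := by
      by_contra hc; push_neg at hc; exact hvw (funext hc)
    apply Finset.prod_eq_zero (Finset.mem_univ i)
    by_cases his : i ∈ s
    · rw [if_pos his, pauli_three_apply, if_neg hi]
    · rw [if_neg his, pauli_zero_apply, if_neg hi]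

lemma sgn_mul_sgn_ne {a b : Fin 2} (hab : a ≠ b) : sgn a * sgn b + 1 = 0 := by
  fin_cases a <;> fin_cases b <;> simp_all [sgn]

lemma charsum (n : ℕ) (v w : Fin n → Fin 2) :
    ∑ s : Finset (Fin n), (∏ i ∈ s, sgn (w i)) * (∏ i ∈ s, sgn (v i))
      = if v = w then (2:ℂ)^n else 0 := by
  have h1 : ∀ s : Finset (Fin n), (∏ i ∈ s, sgn (w i)) * (∏ i ∈ s, sgn (v i))
      = ∏ i ∈ s, (sgn (w i) * sgn (v i)) := fun s => (Finset.prod_mul_distrib).symm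
  simp_rw [h1]
  have h2 : ∏ i : Fin n, (sgn (w i) * sgn (v i) + 1)
      = ∑ s : Finset (Fin n), ∏ i ∈ s, (sgn (w i) * sgn (v i)) := by
    rw [Finset.prod_add, ← Finset.powerset_univ]
    exact Finset.sum_congr rfl fun s _ => by simp
  rw [← h2]
  by_cases hvw : v = w
  · subst hvw
    rw [if_pos rfl]
    have : ∀ i : Fin n, sgn (v i) * sgn (v i) + 1 = 2 := fun i => by rw [sgn_sq]; norm_num
    simp_rw [this]
    simp
  · rw [if_neg hvw]
    obtain ⟨i, hi⟩ : ∃ i, v i ≠ w i := by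
      by_contra hc; push_neg at hc; exact hvw (funext hc)
    exact Finset.prod_eq_zero (Finset.mem_univ i) (sgn_mul_sgn_ne hi.symm)

lemma diagonal_mem_spanZ (n : ℕ) (d : (Fin n → Fin 2) → ℂ) :
    Matrix.diagonal d ∈
      Submodule.span ℂ {P | ∃ s : Finset (Fin n), P = Zstring n s} := by
  have key : ∀ w : Fin n → Fin 2,
      Matrix.diagonal (fun v => if v = w then (1:ℂ) else 0) ∈
        Submodule.span ℂ {P | ∃ s : Finset (Fin n), P = Zstring n s} := by
    intro w
    have hexp : Matrix.diagonal (fun v => if v = w then (1:ℂ) else 0)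
        = ((2:ℂ)^n)⁻¹ • ∑ s : Finset (Fin n),
            (∏ i ∈ s, sgn (w i)) • Zstring n s := by
      funext v v'
      by_cases hv : v = v'
      · subst hv
        simp only [Matrix.smul_apply, Matrix.sum_apply, Zstring_eq_diagonal,
          diagonal_apply_eq, smul_eq_mul]
        rw [charsum n v w]
        by_cases hvw : v = w <;> simp [hvw]
      · simp only [Matrix.smul_apply, Matrix.sum_apply, Zstring_eq_diagonal,
          diagonal_apply_ne _ hv, smul_eq_mul, mul_zero, Finset.sum_const_zero,
          smul_zero]
    rw [hexp]
    exact Submodule.smul_mem _ _ (Submodule.sum_mem _ fun s _ =>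
      Submodule.smul_mem _ _ (Submodule.subset_span ⟨s, rfl⟩))
  have hd : Matrix.diagonal d
      = ∑ w : Fin n → Fin 2, d w • Matrix.diagonal (fun v => if v = w then (1:ℂ) else 0) := by
    funext v v'
    by_cases hv : v = v'
    · subst hv
      simp only [Matrix.sum_apply, Matrix.smul_apply, diagonal_apply_eq, smul_eq_mul,
        mul_ite, mul_one, mul_zero]
      simp
    · simp [Matrix.sum_apply, diagonal_apply_ne _ hv]
  rw [hd]
  exact Submodule.sum_mem _ fun w _ => Submodule.smul_mem _ _ (key w)

lemma sgn_injective : Function.Injective sgn := by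
  intro a b hab
  fin_cases a <;> fin_cases b <;> simp_all [sgn] <;> norm_num at hab

open Module.End

lemma toEuclideanLin_mul {m : Type*} [Fintype m] [DecidableEq m] (A B : Matrix m m ℂ) :
    Matrix.toEuclideanLin (A * B) =
      (Matrix.toEuclideanLin A) * (Matrix.toEuclideanLin B) := by
  apply LinearMap.ext
  intro x
  show _ = Matrix.toEuclideanLin A (Matrix.toEuclideanLin B x)
  simp only [Matrix.toEuclideanLin_apply, Equiv.apply_symm_apply, Matrix.mulVec_mulVec]

lemma toEuclideanLin_one {m : Type*} [Fintype m] [DecidableEq m] :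
    Matrix.toEuclideanLin (1 : Matrix m m ℂ) = LinearMap.id := by
  apply LinearMap.ext
  intro x
  show (WithLp.equiv 2 (m → ℂ)).symm ((1 : Matrix m m ℂ) *ᵥ (WithLp.equiv 2 (m → ℂ)) x) = x
  rw [Matrix.one_mulVec]
  exact (WithLp.equiv 2 (m → ℂ)).symm_apply_apply x

set_option maxHeartbeats 1000000 in
theorem simul_diag {m : Type*} [Fintype m] [DecidableEq m] {ι : Type*} [Fintype ι]
    (A : ι → Matrix m m ℂ) (hherm : ∀ i, (A i)ᴴ = A i)
    (hcomm : ∀ i j, A i * A j = A j * A i)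
    (hsq : ∀ i, A i * A i = 1) :
    ∃ U : Matrix m m ℂ, Uᴴ * U = 1 ∧
      ∀ i, Uᴴ * A i * U = Matrix.diagonal (fun j => (Uᴴ * A i * U) j j) := by
  classical
  set T : ι → Module.End ℂ (EuclideanSpace ℂ m) :=
    (fun i => Matrix.toEuclideanLin (A i)) with hTdef
  have hT : ∀ i, (T i).IsSymmetric := fun i =>
    Matrix.isHermitian_iff_isSymmetric.mp (hherm i)
  have hcommT : Pairwise (Function.onFun Commute T) := by
    intro i j _
    show T i * T j = T j * T i
    rw [hTdef]
    simp only [← toEuclideanLin_mul, hcomm i j]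
  have hTsq : ∀ i : ι, T i * T i = 1 := by
    intro i
    rw [hTdef]
    simp only [← toEuclideanLin_mul, hsq]
    exact toEuclideanLin_one
  have hsup : ⨆ χ : ι → Fin 2, ⨅ i, eigenspace (T i) (sgn (χ i)) = ⊤ := by
    rw [← top_le_iff]
    rw [← LinearMap.IsSymmetric.iSup_iInf_eq_top_of_commute hT hcommT]
    apply iSup_le
    intro γ
    by_cases hγ : ∀ i, γ i = 1 ∨ γ i = -1
    · have heq : (⨅ i, eigenspace (T i) (γ i))
          = ⨅ i, eigenspace (T i) (sgn ((fun i => if γ i = 1 then 0 else 1) i)) := by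
        congr 1
        funext i
        rcases hγ i with h1 | h1 <;> simp only [h1, sgn] <;> norm_num
      rw [heq]
      exact le_iSup (fun χ : ι → Fin 2 => ⨅ i, eigenspace (T i) (sgn (χ i)))
        (fun i => if γ i = 1 then 0 else 1)
    · push_neg at hγ
      obtain ⟨i, h1, h2⟩ := hγ
      have hbot : eigenspace (T i) (γ i) = ⊥ := by
        rw [eq_bot_iff]
        intro x hx
        have hx' : T i x = γ i • x := mem_eigenspace_iff.mp hx
        have hsq2 : x = γ i • (γ i • x) := by
          have ha : (T i * T i) x = x := by rw [hTsq i]; rfl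
          have hb : (T i * T i) x = T i (T i x) := rfl
          rw [hb, hx', _root_.map_smul, hx'] at ha
          exact ha.symm
        have hz : (γ i * γ i - 1) • x = 0 := by
          rw [sub_smul, mul_smul, one_smul, ← hsq2, sub_self]
        have hne : γ i * γ i - 1 ≠ 0 := by
          intro hc
          have : (γ i - 1) * (γ i + 1) = 0 := by linear_combination hc
          rcases mul_eq_zero.mp this with hc' | hc'
          · exact h1 (by linear_combination hc')
          · exact h2 (by linear_combination hc')
        rcases smul_eq_zero.mp hz with hc | hc
        · exact absurd hc hne
        · simp [hc]
      exact le_trans (iInf_le _ i) (by rw [hbot]; exact bot_le)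
  have hOF := (LinearMap.IsSymmetric.orthogonalFamily_iInf_eigenspaces hT).comp
    (f := fun χ : ι → Fin 2 => fun i => sgn (χ i))
    (fun χ₁ χ₂ h12 => funext fun i => sgn_injective (congrFun h12 i))
  have hInt : DirectSum.IsInternal
      (fun χ : ι → Fin 2 => ⨅ i, eigenspace (T i) (sgn (χ i))) := by
    rw [hOF.isInternal_iff]
    rw [hsup, Submodule.top_orthogonal_eq_bot]
  let B0 := hInt.collectedOrthonormalBasis hOF
    (fun χ => stdOrthonormalBasis ℂ ↥(⨅ i, eigenspace (T i) (sgn (χ i))))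
  have hcard : Fintype.card
      (Σ χ : ι → Fin 2, Fin (Module.finrank ℂ
        ((⨅ i, eigenspace (T i) (sgn (χ i)) : Submodule ℂ (EuclideanSpace ℂ m)))))
      = Fintype.card m := by
    rw [← Module.finrank_eq_card_basis B0.toBasis]
    simp
  let B := B0.reindex (Fintype.equivOfCardEq hcard)
  have hBmem : ∀ j : m, ∃ χ : ι → Fin 2,
      ∀ i, B j ∈ eigenspace (T i) (sgn (χ i)) := by
    intro j
    refine ⟨((Fintype.equivOfCardEq hcard).symm j).1, fun i => ?_⟩
    have heq : B j = B0 ((Fintype.equivOfCardEq hcard).symm j) := B0.reindex_apply _ j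
    rw [heq]
    have hmem := hInt.collectedOrthonormalBasis_mem hOF
      (fun χ => stdOrthonormalBasis ℂ ↥(⨅ i, eigenspace (T i) (sgn (χ i))))
      ((Fintype.equivOfCardEq hcard).symm j)
    exact (Submodule.mem_iInf _).mp hmem i
  set U : Matrix m m ℂ := Matrix.of (fun a j => B j a) with hU
  have hinner : ∀ j k, (∑ a, star (B j a) * B k a) = if j = k then (1:ℂ) else 0 := by
    intro j k
    have horth := orthonormal_iff_ite.mp B.orthonormal j k
    rw [← horth, PiLp.inner_apply]
    simp [RCLike.inner_apply]
    exact Finset.sum_congr rfl fun _ _ => mul_comm _ _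
  have hUU : Uᴴ * U = 1 := by
    ext j k
    rw [Matrix.mul_apply, Matrix.one_apply]
    simp only [Matrix.conjTranspose_apply, hU, Matrix.of_apply]
    exact hinner j k
  refine ⟨U, hUU, ?_⟩
  intro i
  have heig : ∀ j : m, ∃ μ : ℂ,
      (A i) *ᵥ (fun a => B j a) = fun a => μ * B j a := by
    intro j
    obtain ⟨χ, hχ⟩ := hBmem j
    refine ⟨sgn (χ i), ?_⟩
    have heqv : T i (B j) = sgn (χ i) • B j := mem_eigenspace_iff.mp (hχ i)
    have heq2 := congrArg (WithLp.equiv 2 (m → ℂ)) heqv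
    rw [hTdef] at heq2
    simp only [Matrix.toEuclideanLin_apply, Equiv.apply_symm_apply] at heq2
    funext a
    exact congrFun heq2 a
  ext j k
  by_cases hjk : j = k
  · subst hjk; rw [Matrix.diagonal_apply_eq]
  · rw [Matrix.diagonal_apply_ne _ hjk]
    obtain ⟨μ, hμ⟩ := heig k
    rw [Matrix.mul_assoc, Matrix.mul_apply]
    have hcol : ∀ a, (A i * U) a k = μ * B k a := by
      intro a
      rw [Matrix.mul_apply]
      have := congrFun hμ a
      simpa [hU, Matrix.mulVec, dotProduct] using this
    simp only [hcol, Matrix.conjTranspose_apply]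
    simp only [hU, Matrix.of_apply]
    have hfac : ∑ a, star (B j a) * (μ * B k a)
        = μ * ∑ a, star (B j a) * B k a := by
      rw [Finset.mul_sum]; apply Finset.sum_congr rfl; intros; ring
    rw [hfac, hinner j k, if_neg hjk, mul_zero]


lemma Zstring_empty (n : ℕ) : Zstring n ∅ = 1 := by
  have h0 : (fun i : Fin n => if i ∈ (∅ : Finset (Fin n)) then (3 : Fin 4) else 0)
      = fun _ => 0 := by funext i; simp
  rw [Zstring, h0]
  exact PauliString_zero n

lemma Zstring_mul (n : ℕ) (s t : Finset (Fin n)) (hst : Disjoint s t) :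
    Zstring n s * Zstring n t = Zstring n (s ∪ t) := by
  rw [Zstring_eq_diagonal, Zstring_eq_diagonal, Zstring_eq_diagonal,
    Matrix.diagonal_mul_diagonal]
  have h1 : (fun v : Fin n → Fin 2 => (∏ i ∈ s, sgn (v i)) * ∏ i ∈ t, sgn (v i))
      = fun v => ∏ i ∈ s ∪ t, sgn (v i) :=
    funext fun v => (Finset.prod_union hst).symm
  rw [h1]

lemma Zstring_comm (n : ℕ) (s t : Finset (Fin n)) :
    Zstring n s * Zstring n t = Zstring n t * Zstring n s := by
  rw [Zstring_eq_diagonal, Zstring_eq_diagonal, Matrix.diagonal_mul_diagonal,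
    Matrix.diagonal_mul_diagonal]
  have h1 : (fun v : Fin n → Fin 2 => (∏ i ∈ s, sgn (v i)) * ∏ i ∈ t, sgn (v i))
      = fun v => (∏ i ∈ t, sgn (v i)) * ∏ i ∈ s, sgn (v i) :=
    funext fun v => mul_comm _ _
  rw [h1]

lemma Zsingle_list_prod (n : ℕ) (l : List (Fin n)) (hl : l.Nodup) :
    (l.map (fun i => Zstring n {i})).prod = Zstring n l.toFinset := by
  induction l with
  | nil => simpa using (Zstring_empty n).symm
  | cons i l ih =>
    rw [List.map_cons, List.prod_cons, ih (List.Nodup.of_cons hl), List.toFinset_cons,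
      Finset.insert_eq,
      ← Zstring_mul n {i} l.toFinset (by
        simp only [Finset.disjoint_singleton_left, List.mem_toFinset]
        exact (List.nodup_cons.mp hl).1)]

lemma PZconj_mul (n : ℕ) (U : Matrix (Fin n → Fin 2) (Fin n → Fin 2) ℂ)
    (hUU : Uᴴ * U = 1) (A B : Matrix (Fin n → Fin 2) (Fin n → Fin 2) ℂ) :
    (U * A * Uᴴ) * (U * B * Uᴴ) = U * (A * B) * Uᴴ := by
  have h1 : Uᴴ * (U * (B * Uᴴ)) = B * Uᴴ := by
    rw [← Matrix.mul_assoc, hUU, Matrix.one_mul]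
  simp only [Matrix.mul_assoc, h1]

lemma PZconj_list_prod (n : ℕ) (U : Matrix (Fin n → Fin 2) (Fin n → Fin 2) ℂ)
    (hUU : Uᴴ * U = 1) (hUUc : U * Uᴴ = 1)
    (b : Fin n → Matrix (Fin n → Fin 2) (Fin n → Fin 2) ℂ)
    (hb : ∀ i, b i = U * Zstring n {i} * Uᴴ) (l : List (Fin n)) :
    (l.map b).prod = U * (l.map (fun i => Zstring n {i})).prod * Uᴴ := by
  induction l with
  | nil => simp [hUUc]
  | cons i l ih =>
    rw [List.map_cons, List.prod_cons, List.map_cons, List.prod_cons, ih, hb i,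
      PZconj_mul n U hUU]

set_option maxHeartbeats 1000000 in
theorem part1 (n : ℕ) (h : Submodule ℂ (Matrix (Fin n → Fin 2) (Fin n → Fin 2) ℂ))
    (hspan : ∃ F : Set (Fin n → Fin 4), h = Submodule.span ℂ (PauliString n '' F))
    (habel : ∀ x ∈ h, ∀ y ∈ h, ⁅x, y⁆ = 0) :
    ∃ U : Matrix (Fin n → Fin 2) (Fin n → Fin 2) ℂ, Uᴴ * U = 1 ∧
      ∀ x ∈ h, Uᴴ * x * U ∈
        Submodule.span ℂ {P | ∃ s : Finset (Fin n), P = Zstring n s} := by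
  classical
  obtain ⟨F, hF⟩ := hspan
  haveI : Fintype {f : Fin n → Fin 4 // PauliString n f ∈ h} := Fintype.ofFinite _
  obtain ⟨U, hUU, hdiag⟩ := simul_diag
    (ι := {f : Fin n → Fin 4 // PauliString n f ∈ h})
    (fun f => PauliString n f.1)
    (fun f => PauliString_conjTranspose n f.1)
    (fun f g => by
      have := habel _ f.2 _ g.2
      rwa [Ring.lie_def, sub_eq_zero] at this)
    (fun f => PauliString_sq n f.1)
  refine ⟨U, hUU, ?_⟩
  intro x hx
  have hW : h ≤ Submodule.comap
      ((LinearMap.mulRight ℂ U).comp (LinearMap.mulLeft ℂ Uᴴ))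
      (Submodule.span ℂ {P | ∃ s : Finset (Fin n), P = Zstring n s}) := by
    rw [hF]
    apply Submodule.span_le.mpr
    rintro _ ⟨f, hfF, rfl⟩
    have hfh : PauliString n f ∈ h := by
      rw [hF]; exact Submodule.subset_span ⟨f, hfF, rfl⟩
    have hd := hdiag ⟨f, hfh⟩
    show Uᴴ * PauliString n f * U
      ∈ Submodule.span ℂ {P | ∃ s : Finset (Fin n), P = Zstring n s}
    rw [show Uᴴ * PauliString n f * U
        = Uᴴ * PauliString n (⟨f, hfh⟩ : {f : Fin n → Fin 4 // PauliString n f ∈ h}).1 * U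
        from rfl, hd]
    exact diagonal_mem_spanZ n _
  have := hW hx
  simpa using this

/-- **Theorem A2' / A2''.**  Any Abelian subalgebra `h ⊆ su(2^n)` spanned by Pauli
strings can be conjugated by a unitary into the span of products of the
single-qubit `Z` operators; consequently there is an Abelian family `b` of at
most `n` commuting elements with `h ⊆ M(b)`. -/
theorem abelian_pauli_subalgebra_conjugate_to_Z_products
    (n : ℕ) (h : Submodule ℂ (Matrix (Fin n → Fin 2) (Fin n → Fin 2) ℂ))
    (hspan : ∃ F : Set (Fin n → Fin 4), h = Submodule.span ℂ (PauliString n '' F))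
    (habel : ∀ x ∈ h, ∀ y ∈ h, ⁅x, y⁆ = 0) :
    (∃ U : Matrix (Fin n → Fin 2) (Fin n → Fin 2) ℂ, Uᴴ * U = 1 ∧
      ∀ x ∈ h, Uᴴ * x * U ∈
        Submodule.span ℂ {P | ∃ s : Finset (Fin n), P = Zstring n s}) ∧
    ∃ b : Fin n → Matrix (Fin n → Fin 2) (Fin n → Fin 2) ℂ,
      (∀ i j, ⁅b i, b j⁆ = 0) ∧ h ≤ multClosure n b := by
  classical
  obtain ⟨U, hUU, hdiagU⟩ := part1 n h hspan habel
  have hUUc : U * Uᴴ = 1 := mul_eq_one_comm.mp hUU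
  refine ⟨⟨U, hUU, hdiagU⟩, fun i => U * Zstring n {i} * Uᴴ, ?_, ?_⟩
  · intro i j
    rw [Ring.lie_def, sub_eq_zero, PZconj_mul n U hUU, PZconj_mul n U hUU,
      Zstring_comm]
  · intro x hx
    have h1 := hdiagU x hx
    have hkey : ∀ s : Finset (Fin n),
        U * Zstring n s * Uᴴ
          = (((List.finRange n).filter (· ∈ s)).map
              (fun i => U * Zstring n {i} * Uᴴ)).prod := by
      intro s
      rw [PZconj_list_prod n U hUU hUUc _ (fun i => rfl)]
      rw [Zsingle_list_prod n _ ((List.nodup_finRange n).filter _)]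
      have hts : ((List.finRange n).filter (· ∈ s)).toFinset = s := by
        ext x; simp
      rw [hts]
    have hx2 : x = U * (Uᴴ * x * U) * Uᴴ := by
      have e : U * (Uᴴ * x * U) * Uᴴ = U * Uᴴ * x * (U * Uᴴ) := by
        simp only [Matrix.mul_assoc]
      rw [e, hUUc, Matrix.one_mul, Matrix.mul_one]
    have hmap : Submodule.map
        ((LinearMap.mulRight ℂ Uᴴ).comp (LinearMap.mulLeft ℂ U))
        (Submodule.span ℂ {P | ∃ s : Finset (Fin n), P = Zstring n s})
        ≤ multClosure n (fun i => U * Zstring n {i} * Uᴴ) := by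
      rw [Submodule.map_span]
      apply Submodule.span_le.mpr
      rintro _ ⟨P, ⟨s, rfl⟩, rfl⟩
      have : ((LinearMap.mulRight ℂ Uᴴ).comp (LinearMap.mulLeft ℂ U))
          (Zstring n s) = U * Zstring n s * Uᴴ := by
        simp [Matrix.mul_assoc]
      rw [this]
      exact Submodule.subset_span ⟨s, hkey s⟩
    rw [hx2]
    apply hmap
    refine Submodule.mem_map.mpr ⟨Uᴴ * x * U, h1, ?_⟩
    simp [Matrix.mul_assoc]
end

section
/- Let g = k ⊕ m be a Cartan decomposition of a Pauli dynamical Lie algebra and b_1, ..., b_n pairwise commuting Pauli strings in m in one connected component of the frustration graph of g. If both k^{r-1}_{1...r-2} and k^{r}_{1...r-1} are nonempty, then |k^{r-1}_{1...r-2}| > |k^{r}_{1...r-1}|: the successive nonempty fragments of k strictly decrease in size. -/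
open Matrix
open scoped Classical

def frustGraph {M : Type*} [Ring M] (S : Set M) : SimpleGraph S where
  Adj P Q := P ≠ Q ∧ ⁅(P : M), (Q : M)⁆ ≠ 0
  symm := ⟨fun P Q h => ⟨h.1.symm, fun hz => h.2 (by rw [Ring.lie_def] at hz ⊢; rw [← neg_sub, hz, neg_zero])⟩⟩
  loopless := ⟨fun P h => h.1 rfl⟩


abbrev PMat (nq : ℕ) := Matrix (Fin nq → Fin 2) (Fin nq → Fin 2) ℂ

-- sign table: 1 if commute, -1 if anticommute
noncomputable def psign (a b : Fin 4) : ℂ :=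
  if a = 0 ∨ b = 0 ∨ a = b then 1 else -1

lemma pauli_sq (a : Fin 4) : pauli a * pauli a = 1 := by
  fin_cases a <;>
    · ext i j
      fin_cases i <;> fin_cases j <;>
        simp [pauli, Matrix.mul_apply, Fin.sum_univ_two, Matrix.one_apply, Complex.I_mul_I] <;> ring_nf <;>
        simp [Complex.I_sq]

lemma pauli_sign (a b : Fin 4) : pauli a * pauli b = psign a b • (pauli b * pauli a) := by
  fin_cases a <;> fin_cases b <;>
    · ext i j
      fin_cases i <;> fin_cases j <;>
        simp [pauli, psign, Matrix.mul_apply, Fin.sum_univ_two, Matrix.one_apply] <;> ring_nf <;>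
        simp [Complex.I_sq] <;> ring_nf

lemma pauli_trace (a b : Fin 4) :
    Matrix.trace (pauli a * pauli b) = if a = b then 2 else 0 := by
  fin_cases a <;> fin_cases b <;>
    simp [pauli, Matrix.trace, Matrix.mul_apply, Fin.sum_univ_two, Matrix.diag, Matrix.one_apply, Complex.I_mul_I] <;>
    ring_nf <;> simp [Complex.I_sq] <;> ring_nf

variable {n : ℕ}

lemma ps_key (f g : Fin n → Fin 4) (v w : Fin n → Fin 2) :
    (PauliString n f * PauliString n g) v w
      = ∏ i, (pauli (f i) * pauli (g i)) (v i) (w i) := by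
  have h1 : ∀ i : Fin n, (pauli (f i) * pauli (g i)) (v i) (w i)
      = ∑ x : Fin 2, pauli (f i) (v i) x * pauli (g i) x (w i) := fun i =>
    Matrix.mul_apply
  rw [Finset.prod_congr rfl (fun i _ => h1 i), Finset.prod_univ_sum,
    Fintype.piFinset_univ, Matrix.mul_apply]
  simp only [PauliString]
  exact Finset.sum_congr rfl (fun u _ => (Finset.prod_mul_distrib).symm)

lemma ps_one : PauliString n (fun _ => 0) = 1 := by
  ext v w
  simp only [PauliString]
  by_cases h : v = w
  · subst h
    simp [pauli, Matrix.one_apply]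
  · obtain ⟨i, hi⟩ : ∃ i, v i ≠ w i := by
      by_contra hc
      push_neg at hc
      exact h (funext hc)
    rw [Matrix.one_apply_ne h]
    exact Finset.prod_eq_zero (Finset.mem_univ i) (by simp [pauli, Matrix.one_apply, hi])

lemma prod_one_apply (v w : Fin n → Fin 2) :
    (∏ i, (1 : Matrix (Fin 2) (Fin 2) ℂ) (v i) (w i))
      = (1 : Matrix (Fin n → Fin 2) (Fin n → Fin 2) ℂ) v w := by
  by_cases h : v = w
  · subst h; simp [Matrix.one_apply]
  · obtain ⟨i, hi⟩ : ∃ i, v i ≠ w i := by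
      by_contra hc; push_neg at hc; exact h (funext hc)
    rw [Matrix.one_apply_ne h]
    exact Finset.prod_eq_zero (Finset.mem_univ i) (by simp [Matrix.one_apply, hi])

lemma ps_sq (f : Fin n → Fin 4) : PauliString n f * PauliString n f = 1 := by
  ext v w
  rw [ps_key]
  have : ∀ i : Fin n, (pauli (f i) * pauli (f i)) (v i) (w i) = (1 : Matrix (Fin 2) (Fin 2) ℂ) (v i) (w i) :=
    fun i => by rw [pauli_sq]
  rw [Finset.prod_congr rfl (fun i _ => this i)]
  exact prod_one_apply v w

lemma ps_ne_zero (f : Fin n → Fin 4) : PauliString n f ≠ 0 := by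
  intro h
  have := ps_sq f
  rw [h, zero_mul] at this
  have h2 := congrFun (congrFun this (fun _ => 0)) (fun _ => 0)
  simp [Matrix.one_apply] at h2

lemma ps_mul_ne_zero (f g : Fin n → Fin 4) : PauliString n f * PauliString n g ≠ 0 := by
  intro h
  have : PauliString n f * PauliString n g * PauliString n g = 0 := by rw [h, zero_mul]
  rw [mul_assoc, ps_sq, mul_one] at this
  exact ps_ne_zero f this

lemma ps_dichotomy (f g : Fin n → Fin 4) :
    PauliString n f * PauliString n g = PauliString n g * PauliString n f ∨
    PauliString n f * PauliString n g = -(PauliString n g * PauliString n f) := by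
  have key : PauliString n f * PauliString n g
      = (∏ i, psign (f i) (g i)) • (PauliString n g * PauliString n f) := by
    ext v w
    rw [ps_key]
    have : ∀ i : Fin n, (pauli (f i) * pauli (g i)) (v i) (w i)
        = psign (f i) (g i) * (pauli (g i) * pauli (f i)) (v i) (w i) := fun i => by
      rw [pauli_sign]; rfl
    rw [Finset.prod_congr rfl (fun i _ => this i), Finset.prod_mul_distrib]
    rw [Matrix.smul_apply, ps_key]
    rfl
  have hsigns : (∏ i, psign (f i) (g i)) = 1 ∨ (∏ i, psign (f i) (g i)) = -1 := by
    induction (Finset.univ : Finset (Fin n)) using Finset.induction with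
    | empty => simp
    | insert _ _ hx ih =>
      rw [Finset.prod_insert hx]
      rcases ih with h | h <;> rw [h] <;>
        · unfold psign
          split <;> simp
  rcases hsigns with h | h
  · left; rw [key, h, one_smul]
  · right; rw [key, h]; simp

lemma ps_trace (f g : Fin n → Fin 4) :
    Matrix.trace (PauliString n f * PauliString n g) = if f = g then (2:ℂ)^n else 0 := by
  have : Matrix.trace (PauliString n f * PauliString n g)
      = ∏ i, Matrix.trace (pauli (f i) * pauli (g i)) := by
    rw [Matrix.trace]
    simp only [Matrix.diag]
    have : ∀ v : Fin n → Fin 2, (PauliString n f * PauliString n g) v v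
        = ∏ i, (pauli (f i) * pauli (g i)) (v i) (v i) := fun v => ps_key f g v v
    rw [Finset.sum_congr rfl (fun v _ => this v)]
    have h2 : ∀ i : Fin n, (pauli (f i) * pauli (g i)).trace
        = ∑ x : Fin 2, (pauli (f i) * pauli (g i)) x x := fun i => rfl
    rw [Finset.prod_congr rfl (fun i _ => h2 i), Finset.prod_univ_sum,
      Fintype.piFinset_univ]
  rw [this, Finset.prod_congr rfl (fun i _ => pauli_trace (f i) (g i))]
  by_cases h : f = g
  · subst h; simp
  · obtain ⟨i, hi⟩ : ∃ i, f i ≠ g i := by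
      by_contra hc; push_neg at hc; exact h (funext hc)
    rw [if_neg h]
    exact Finset.prod_eq_zero (Finset.mem_univ i) (by simp [hi])

lemma ps_rigid (f g : Fin n → Fin 4) (c : ℂ) (hc : c ≠ 0)
    (h : PauliString n f = c • PauliString n g) : PauliString n f = PauliString n g := by
  have hfg : f = g := by
    by_contra hne
    have h2 : PauliString n f * PauliString n g = c • (1 : Matrix _ _ ℂ) := by
      rw [h, Matrix.smul_mul, ps_sq]
    have h3 := congrArg Matrix.trace h2
    rw [ps_trace, if_neg hne, Matrix.trace_smul, Matrix.trace_one] at h3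
    have hcard : (Fintype.card (Fin n → Fin 2) : ℂ) ≠ 0 := by
      have hc2 : (Fintype.card (Fin n → Fin 2)) = 2^n := by simp [Fintype.card_fun]
      rw [hc2]
      push_cast
      exact pow_ne_zero _ two_ne_zero
    have : c • (Fintype.card (Fin n → Fin 2) : ℂ) ≠ 0 := by
      simp only [smul_eq_mul]
      exact mul_ne_zero hc hcard
    exact this h3.symm
  subst hfg
  have : (1 - c) • PauliString n f = 0 := by
    rw [sub_smul, one_smul]
    nth_rewrite 1 [h]
    rw [sub_self]
  rcases smul_eq_zero.mp this with h1 | h1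
  · have : c = 1 := by linear_combination -h1
    rw [h, this, one_smul]
  · exact absurd h1 (ps_ne_zero f)

variable {n : ℕ}

def IsP (P : PMat n) : Prop := ∃ f, P = PauliString n f

def AC (P Q : PMat n) : Prop := P * Q = -(Q * P)

lemma AC.symm' {P Q : PMat n} (h : AC P Q) : AC Q P := by
  unfold AC at *
  rw [h, neg_neg]

lemma isP_mul_ne_zero {P Q : PMat n} (hP : IsP P) (hQ : IsP Q) : P * Q ≠ 0 := by
  obtain ⟨f, rfl⟩ := hP; obtain ⟨g, rfl⟩ := hQ; exact ps_mul_ne_zero f g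

lemma isP_dich {P Q : PMat n} (hP : IsP P) (hQ : IsP Q) : Commute P Q ∨ AC P Q := by
  obtain ⟨f, rfl⟩ := hP; obtain ⟨g, rfl⟩ := hQ; exact ps_dichotomy f g

lemma isP_rigid {P Q : PMat n} (hP : IsP P) (hQ : IsP Q) {c : ℂ} (hc : c ≠ 0)
    (h : P = c • Q) : P = Q := by
  obtain ⟨f, rfl⟩ := hP; obtain ⟨g, rfl⟩ := hQ; exact ps_rigid f g c hc h

lemma isP_sq {P : PMat n} (hP : IsP P) : P * P = 1 := by
  obtain ⟨f, rfl⟩ := hP; exact ps_sq f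

lemma not_comm_and_AC {P Q : PMat n} (hP : IsP P) (hQ : IsP Q) :
    ¬(Commute P Q ∧ AC P Q) := by
  rintro ⟨h1, h2⟩
  have := h1.eq
  unfold AC at h2
  rw [this] at h2
  have : (2 : ℂ) • (Q * P) = 0 := by
    rw [two_smul]
    rw [eq_neg_iff_add_eq_zero] at h2
    exact h2
  rcases smul_eq_zero.mp this with h | h
  · norm_num at h
  · exact isP_mul_ne_zero hQ hP h

lemma lie_zero_iff {P Q : PMat n} : ⁅P, Q⁆ = (0 : PMat n) ↔ Commute P Q := by
  rw [Ring.lie_def, sub_eq_zero]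
  exact ⟨fun h => h, fun h => h⟩

lemma lie_ne_iff {P Q : PMat n} (hP : IsP P) (hQ : IsP Q) : ⁅P, Q⁆ ≠ 0 ↔ AC P Q := by
  constructor
  · intro h
    rcases isP_dich hP hQ with h1 | h1
    · exact absurd (lie_zero_iff.mpr h1) h
    · exact h1
  · intro h hz
    exact not_comm_and_AC hP hQ ⟨lie_zero_iff.mp hz, h⟩

section transport
variable {P Q R T : PMat n} {c : ℂ}

lemma smul_cancel (hc : c ≠ 0) {X Y : PMat n} (h : c • X = c • Y) : X = Y := by
  have := congrArg (fun Z => c⁻¹ • Z) h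
  simpa [smul_smul, inv_mul_cancel₀ hc] using this

lemma trCC (h : P * Q = c • R) (hc : c ≠ 0)
    (h1 : Commute P T) (h2 : Commute Q T) : Commute R T := by
  have key : c • (R * T) = c • (T * R) := by
    calc c • (R * T) = (P * Q) * T := by rw [h, Matrix.smul_mul]
    _ = P * (Q * T) := mul_assoc _ _ _
    _ = P * (T * Q) := by rw [h2.eq]
    _ = (P * T) * Q := (mul_assoc _ _ _).symm
    _ = (T * P) * Q := by rw [h1.eq]
    _ = T * (P * Q) := mul_assoc _ _ _
    _ = c • (T * R) := by rw [h, Matrix.mul_smul]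
  exact smul_cancel hc key

lemma trCA (h : P * Q = c • R) (hc : c ≠ 0)
    (h1 : Commute P T) (h2 : AC Q T) : AC R T := by
  have h2' : Q * T = -(T * Q) := h2
  have key : c • (R * T) = c • (-(T * R)) := by
    calc c • (R * T) = (P * Q) * T := by rw [h, Matrix.smul_mul]
    _ = P * (Q * T) := mul_assoc _ _ _
    _ = P * (-(T * Q)) := by rw [h2']
    _ = -(P * (T * Q)) := by rw [mul_neg]
    _ = -((P * T) * Q) := by rw [mul_assoc]
    _ = -((T * P) * Q) := by rw [h1.eq]
    _ = -(T * (P * Q)) := by rw [mul_assoc]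
    _ = c • (-(T * R)) := by rw [h, Matrix.mul_smul, smul_neg]
  exact smul_cancel hc key

lemma trAC (h : P * Q = c • R) (hc : c ≠ 0)
    (h1 : AC P T) (h2 : Commute Q T) : AC R T := by
  have h1' : P * T = -(T * P) := h1
  have key : c • (R * T) = c • (-(T * R)) := by
    calc c • (R * T) = (P * Q) * T := by rw [h, Matrix.smul_mul]
    _ = P * (Q * T) := mul_assoc _ _ _
    _ = P * (T * Q) := by rw [h2.eq]
    _ = (P * T) * Q := (mul_assoc _ _ _).symm
    _ = (-(T * P)) * Q := by rw [h1']
    _ = -((T * P) * Q) := by rw [neg_mul]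
    _ = -(T * (P * Q)) := by rw [mul_assoc]
    _ = c • (-(T * R)) := by rw [h, Matrix.mul_smul, smul_neg]
  exact smul_cancel hc key

lemma trAA (h : P * Q = c • R) (hc : c ≠ 0)
    (h1 : AC P T) (h2 : AC Q T) : Commute R T := by
  have h1' : P * T = -(T * P) := h1
  have h2' : Q * T = -(T * Q) := h2
  have key : c • (R * T) = c • (T * R) := by
    calc c • (R * T) = (P * Q) * T := by rw [h, Matrix.smul_mul]
    _ = P * (Q * T) := mul_assoc _ _ _
    _ = P * (-(T * Q)) := by rw [h2']
    _ = -(P * (T * Q)) := by rw [mul_neg]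
    _ = -((P * T) * Q) := by rw [mul_assoc]
    _ = -((-(T * P)) * Q) := by rw [h1']
    _ = (T * P) * Q := by rw [neg_mul, neg_neg]
    _ = T * (P * Q) := mul_assoc _ _ _
    _ = c • (T * R) := by rw [h, Matrix.mul_smul]
  exact smul_cancel hc key

end transport

section walks
variable {n : ℕ} (g : Finset (PMat n)) (cl : PMat n → Prop)

lemma ac_of_not_comm (hgP : ∀ P ∈ g, IsP P) {P Q : PMat n} (hP : P ∈ g) (hQ : Q ∈ g)
    (h : ¬ Commute P Q) : AC P Q := by
  rcases isP_dich (hgP P hP) (hgP Q hQ) with h1 | h1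
  · exact absurd h1 h
  · exact h1

/-- chord removal: from any AC-walk extract a chord-free one with same endpoints -/
lemma chordfree_reduce (hgP : ∀ P ∈ g, IsP P) :
    ∀ k : ℕ, ∀ w : ℕ → PMat n,
    (∀ i ≤ k, w i ∈ g) → (∀ i ≤ k, cl (w i)) → (∀ i < k, AC (w i) (w (i+1))) →
    ∃ k' ≤ k, ∃ w' : ℕ → PMat n,
      (∀ i ≤ k', w' i ∈ g) ∧ (∀ i ≤ k', cl (w' i)) ∧ (∀ i < k', AC (w' i) (w' (i+1))) ∧
      (∀ i j, i + 2 ≤ j → j ≤ k' → Commute (w' i) (w' j)) ∧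
      w' 0 = w 0 ∧ w' k' = w k := by
  intro k
  induction k using Nat.strong_induction_on with
  | _ k IH =>
    intro w hw1 hw2 hw3
    by_cases hcf : ∀ i j, i + 2 ≤ j → j ≤ k → Commute (w i) (w j)
    · exact ⟨k, le_refl k, w, hw1, hw2, hw3, hcf, rfl, rfl⟩
    · push_neg at hcf
      obtain ⟨i, j, hij, hjk, hnc⟩ := hcf
      have hacij : AC (w i) (w j) :=
        ac_of_not_comm g hgP (hw1 i (by omega)) (hw1 j (by omega)) hnc
      set δ := j - i - 1 with hδ
      have hδ1 : 1 ≤ δ := by omega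
      set k'' := k - δ with hk''
      set w'' : ℕ → PMat n := fun l => if l ≤ i then w l else w (l + δ) with hw''
      have hk''lt : k'' < k := by omega
      have e1 : ∀ l ≤ i, w'' l = w l := fun l hl => by simp [hw'', hl]
      have e2 : ∀ l, i < l → w'' l = w (l + δ) := fun l hl => by
        simp [hw'', Nat.not_le.mpr hl]
      have hsum : i + 1 + δ = j := by omega
      have m1 : ∀ l ≤ k'', w'' l ∈ g := by
        intro l hl
        by_cases h : l ≤ i
        · rw [e1 l h]; exact hw1 l (by omega)
        · rw [e2 l (by omega)]; exact hw1 _ (by omega)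
      have m2 : ∀ l ≤ k'', cl (w'' l) := by
        intro l hl
        by_cases h : l ≤ i
        · rw [e1 l h]; exact hw2 l (by omega)
        · rw [e2 l (by omega)]; exact hw2 _ (by omega)
      have m3 : ∀ l < k'', AC (w'' l) (w'' (l+1)) := by
        intro l hl
        rcases lt_trichotomy l i with h | h | h
        · rw [e1 l (by omega), e1 (l+1) (by omega)]
          exact hw3 l (by omega)
        · subst h
          rw [e1 l (le_refl _), e2 (l+1) (by omega), hsum]
          exact hacij
        · rw [e2 l (by omega), e2 (l+1) (by omega)]
          have : l + δ + 1 = l + 1 + δ := by omega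
          rw [← this]
          exact hw3 (l + δ) (by omega)
      obtain ⟨k', hk'le, w', p1, p2, p3, p4, p5, p6⟩ := IH k'' hk''lt w'' m1 m2 m3
      refine ⟨k', by omega, w', p1, p2, p3, p4, ?_, ?_⟩
      · rw [p5, e1 0 (by omega)]
      · have hkk : k'' + δ = k := by omega
        rw [p6, e2 k'' (by omega), hkk]

/-- interval product along a chord-free walk -/
lemma IPCore (hgP : ∀ P ∈ g, IsP P)
    (hgcl : ∀ P ∈ g, ∀ Q ∈ g, AC P Q → ∃ R ∈ g, ∃ c : ℂ, c ≠ 0 ∧ P * Q = c • R)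
    (hcl : ∀ x y R : PMat n, ∀ c : ℂ, cl x → cl y → c ≠ 0 → x * y = c • R → cl R)
    (k : ℕ) (w : ℕ → PMat n)
    (hw1 : ∀ i ≤ k, w i ∈ g) (hw2 : ∀ i ≤ k, cl (w i)) (hw3 : ∀ i < k, AC (w i) (w (i+1)))
    (hcf : ∀ i j, i + 2 ≤ j → j ≤ k → Commute (w i) (w j))
    (i : ℕ) :
    ∀ j, i ≤ j → j ≤ k →
    ∃ T, T ∈ g ∧ cl T ∧
      (∀ E, AC (w i) E → (∀ s, i < s → s ≤ j → Commute (w s) E) → AC T E) ∧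
      (∀ E, (∀ s, i ≤ s → s ≤ j → Commute (w s) E) → Commute T E) ∧
      (j < k → AC T (w (j+1))) := by
  intro j hij
  induction j, hij using Nat.le_induction with
  | base =>
    intro hik
    refine ⟨w i, hw1 i hik, hw2 i hik, ?_, ?_, ?_⟩
    · intro E hE _; exact hE
    · intro E hE; exact hE i (le_refl i) (le_refl i)
    · intro h; exact hw3 i h
  | succ j hij IH =>
    intro hjk
    obtain ⟨T, hTg, hTcl, hC1, hC2, hC3⟩ := IH (by omega)
    have hACT : AC T (w (j+1)) := hC3 (by omega)
    obtain ⟨T', hT'g, c, hc, heq⟩ := hgcl T hTg (w (j+1)) (hw1 (j+1) hjk) hACT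
    refine ⟨T', hT'g, hcl T (w (j+1)) T' c hTcl (hw2 (j+1) hjk) hc heq, ?_, ?_, ?_⟩
    · intro E hE hmid
      have h1 : AC T E := hC1 E hE (fun s hs1 hs2 => hmid s hs1 (by omega))
      have h2 : Commute (w (j+1)) E := hmid (j+1) (by omega) (le_refl _)
      exact trAC heq hc h1 h2
    · intro E hmid
      have h1 : Commute T E := hC2 E (fun s hs1 hs2 => hmid s hs1 (by omega))
      have h2 : Commute (w (j+1)) E := hmid (j+1) (by omega) (le_refl _)
      exact trCC heq hc h1 h2
    · intro hlt
      have h1 : Commute T (w (j+2)) := by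
        apply hC2
        intro s hs1 hs2
        exact hcf s (j+2) (by omega) (by omega)
      have h2 : AC (w (j+1)) (w (j+2)) := hw3 (j+1) (by omega)
      exact trCA heq hc h1 h2

/-- one cleaning stage -/
lemma cleanStep (hgP : ∀ P ∈ g, IsP P)
    (hgcl : ∀ P ∈ g, ∀ Q ∈ g, AC P Q → ∃ R ∈ g, ∃ c : ℂ, c ≠ 0 ∧ P * Q = c • R)
    (hcl : ∀ x y R : PMat n, ∀ c : ℂ, cl x → cl y → c ≠ 0 → x * y = c • R → cl R)
    (β b1 b2 a cw : PMat n)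
    (hβg : β ∈ g) (hβcl : cl β)
    (hb1β : Commute b1 β) (hb2β : Commute b2 β)
    (hag : a ∈ g) (hacl : cl a) (haβ : Commute a β) (hab1 : AC a b1)
    (hcg : cw ∈ g) (hccl : cl cw) (hcβ : Commute cw β) (hcb2 : AC cw b2)
    (hcb1 : Commute cw b1) :
    ∀ k : ℕ, ∀ w : ℕ → PMat n,
    (∀ i ≤ k, w i ∈ g) → (∀ i ≤ k, cl (w i)) → (∀ i < k, AC (w i) (w (i+1))) →
    w 0 = b1 → w k = b2 →
    ∃ k', ∃ w' : ℕ → PMat n,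
      (∀ i ≤ k', w' i ∈ g) ∧ (∀ i ≤ k', cl (w' i)) ∧ (∀ i ≤ k', Commute (w' i) β) ∧
      (∀ i < k', AC (w' i) (w' (i+1))) ∧ w' 0 = b1 ∧ w' k' = b2 := by
  intro k
  induction k using Nat.strong_induction_on with
  | _ k IH =>
    intro wR hw1R hw2R hw3R hep0R hepkR
    -- chord-free reduction
    obtain ⟨k0, hk0le, w0, q1, q2, q3, q4, q5, q6⟩ :=
      chordfree_reduce g cl hgP k wR hw1R hw2R hw3R
    rw [hep0R] at q5
    rw [hepkR] at q6
    set Drt := (Finset.range (k0+1)).filter (fun l => ¬ Commute (w0 l) β) with hDrt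
    by_cases hD : Drt.Nonempty
    swap
    · -- already clean
      refine ⟨k0, w0, q1, q2, ?_, q3, q5, q6⟩
      intro i hi
      by_contra hcon
      exact hD ⟨i, Finset.mem_filter.mpr ⟨Finset.mem_range.mpr (by omega), hcon⟩⟩
    · obtain ⟨i, hiD, himin⟩ := Finset.exists_min_image Drt id hD
      have hiK : i ≤ k0 := by
        have := (Finset.mem_filter.mp hiD).1
        rw [Finset.mem_range] at this
        omega
      have hidirty : ¬ Commute (w0 i) β := (Finset.mem_filter.mp hiD).2
      have hi1 : 1 ≤ i := by
        rcases Nat.eq_zero_or_pos i with h0 | h0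
        · exfalso; apply hidirty; rw [h0, q5]; exact hb1β
        · exact h0
      have hik : i < k0 := by
        rcases Nat.lt_or_ge i k0 with h0 | h0
        · exact h0
        · exfalso; apply hidirty
          have : i = k0 := by omega
          rw [this, q6]; exact hb2β
      have hclean_of_not : ∀ l ≤ k0, l ∉ Drt → Commute (w0 l) β := by
        intro l hl hnot
        by_contra hcon
        exact hnot (Finset.mem_filter.mpr ⟨Finset.mem_range.mpr (by omega), hcon⟩)
      have hACiβ : AC (w0 i) β := ac_of_not_comm g hgP (q1 i hiK) hβg hidirty
      by_cases hD2 : (Drt.erase i).Nonempty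
      · -- BYPASS case: at least two dirty vertices
        obtain ⟨j, hjD, hjmin⟩ := Finset.exists_min_image (Drt.erase i) id hD2
        have hjDrt : j ∈ Drt := Finset.mem_of_mem_erase hjD
        have hjne : j ≠ i := Finset.ne_of_mem_erase hjD
        have hjK : j ≤ k0 := by
          have := (Finset.mem_filter.mp hjDrt).1; rw [Finset.mem_range] at this; omega
        have hij : i < j := lt_of_le_of_ne (himin j hjDrt) (Ne.symm hjne)
        have hjk : j < k0 := by
          rcases Nat.lt_or_ge j k0 with h0 | h0
          · exact h0
          · exfalso
            have : j = k0 := by omega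
            exact (Finset.mem_filter.mp hjDrt).2 (by rw [this, q6]; exact hb2β)
        have hjdirty : ¬ Commute (w0 j) β := (Finset.mem_filter.mp hjDrt).2
        have hACjβ : AC (w0 j) β := ac_of_not_comm g hgP (q1 j hjK) hβg hjdirty
        have hmid : ∀ s, i < s → s < j → Commute (w0 s) β := by
          intro s hs1 hs2
          apply hclean_of_not s (by omega)
          intro hmem
          have : s ∈ Drt.erase i := Finset.mem_erase.mpr ⟨by omega, hmem⟩
          have := hjmin s this
          simp only [id] at this
          omega
        obtain ⟨T', hT'g, hT'cl, hC1, hC2, hC3⟩ :=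
          IPCore g cl hgP hgcl hcl k0 w0 q1 q2 q3 q4 i (j-1) (by omega) (by omega)
        have hACT'j : AC T' (w0 j) := by
          have := hC3 (by omega)
          have e : j - 1 + 1 = j := by omega
          rwa [e] at this
        obtain ⟨T, hTg, cT, hcT, heqT⟩ := hgcl T' hT'g (w0 j) (q1 j hjK) hACT'j
        have hTcl : cl T := hcl T' (w0 j) T cT hT'cl (q2 j hjK) hcT heqT
        -- relations of T
        have hACT'i1 : AC T' (w0 (i-1)) := by
          apply hC1
          · have h3 := q3 (i-1) (by omega)
            have e : i - 1 + 1 = i := by omega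
            rw [e] at h3
            exact h3.symm'
          · intro s hs1 hs2
            exact (q4 (i-1) s (by omega) (by omega)).symm
        have hACTi1 : AC T (w0 (i-1)) :=
          trAC heqT hcT hACT'i1 ((q4 (i-1) j (by omega) (by omega)).symm)
        have hCT'j1 : Commute T' (w0 (j+1)) := by
          apply hC2
          intro s hs1 hs2
          exact q4 s (j+1) (by omega) (by omega)
        have hACTj1 : AC T (w0 (j+1)) := trCA heqT hcT hCT'j1 (q3 j hjk)
        have hACT'β : AC T' β := by
          apply hC1 β hACiβ
          intro s hs1 hs2
          exact hmid s hs1 (by omega)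
        have hCTβ : Commute T β := trAA heqT hcT hACT'β hACjβ
        -- new walk
        set k1 := k0 - (j - i) with hk1
        set w1 : ℕ → PMat n := fun l =>
          if l < i then w0 l else if l = i then T else w0 (l + (j - i)) with hw1def
        have e1 : ∀ l, l < i → w1 l = w0 l := fun l hl => by simp [hw1def, hl]
        have eT : w1 i = T := by simp [hw1def]
        have e2 : ∀ l, i < l → w1 l = w0 (l + (j - i)) := by
          intro l hl
          simp only [hw1def]
          rw [if_neg (by omega : ¬ (l < i)), if_neg (by omega : ¬ (l = i))]
        have hk1lt : k1 < k0 := by omega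
        have hk1i : i < k1 := by omega
        have n1 : ∀ l ≤ k1, w1 l ∈ g := by
          intro l hl
          rcases lt_trichotomy l i with h | h | h
          · rw [e1 l h]; exact q1 l (by omega)
          · rw [h, eT]; exact hTg
          · rw [e2 l h]; exact q1 _ (by omega)
        have n2 : ∀ l ≤ k1, cl (w1 l) := by
          intro l hl
          rcases lt_trichotomy l i with h | h | h
          · rw [e1 l h]; exact q2 l (by omega)
          · rw [h, eT]; exact hTcl
          · rw [e2 l h]; exact q2 _ (by omega)
        have n3 : ∀ l < k1, AC (w1 l) (w1 (l+1)) := by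
          intro l hl
          rcases lt_trichotomy (l+1) i with h | h | h
          · rw [e1 l (by omega), e1 (l+1) h]; exact q3 l (by omega)
          · rw [e1 l (by omega), h, eT]
            have : w0 (l : ℕ) = w0 (i-1) := by rw [(by omega : l = i - 1)]
            rw [this]
            exact hACTi1.symm'
          · rcases Nat.eq_or_lt_of_le (by omega : i ≤ l) with h2 | h2
            · rw [e2 (l+1) (by omega), (by omega : l + 1 + (j - i) = j + 1),
                (by omega : l = i), eT]
              exact hACTj1
            · rw [e2 l h2, e2 (l+1) (by omega)]
              have : l + (j-i) + 1 = l + 1 + (j - i) := by omega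
              rw [← this]
              exact q3 _ (by omega)
        have n5 : w1 0 = b1 := by rw [e1 0 (by omega)]; exact q5
        have n6 : w1 k1 = b2 := by
          rw [e2 k1 hk1i, (by omega : k1 + (j - i) = k0)]; exact q6
        exact IH k1 (by omega) w1 n1 n2 n3 n5 n6
      · -- SOLO case: unique dirty vertex i
        have hsolo : ∀ l ≤ k0, l ≠ i → Commute (w0 l) β := by
          intro l hl hne
          apply hclean_of_not l hl
          intro hmem
          exact hD2 ⟨l, Finset.mem_erase.mpr ⟨hne, hmem⟩⟩
        -- D = w0 i, f = w0 (i-1), h = w0 (i+1)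
        have hfD : AC (w0 (i-1)) (w0 i) := by
          have h3 := q3 (i-1) (by omega)
          have e : i - 1 + 1 = i := by omega
          rwa [e] at h3
        have hDh : AC (w0 i) (w0 (i+1)) := q3 i hik
        have hfh : Commute (w0 (i-1)) (w0 (i+1)) := q4 (i-1) (i+1) (by omega) (by omega)
        have hfβ : Commute (w0 (i-1)) β := hsolo (i-1) (by omega) (by omega)
        have hhβ : Commute (w0 (i+1)) β := hsolo (i+1) (by omega) (by omega)
        have hfg' : w0 (i-1) ∈ g := q1 (i-1) (by omega)
        have hDg' : w0 i ∈ g := q1 i (by omega)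
        have hhg' : w0 (i+1) ∈ g := q1 (i+1) (by omega)
        have hfcl' : cl (w0 (i-1)) := q2 (i-1) (by omega)
        have hDcl' : cl (w0 i) := q2 i (by omega)
        have hhcl' : cl (w0 (i+1)) := q2 (i+1) (by omega)
        obtain ⟨R1, hR1g, c1, hc1, heq1⟩ := hgcl (w0 (i-1)) hfg' (w0 i) hDg' hfD
        have hR1cl : cl R1 := hcl _ _ _ _ hfcl' hDcl' hc1 heq1
        have hACR1h : AC R1 (w0 (i+1)) := trCA heq1 hc1 hfh hDh
        obtain ⟨R2, hR2g, c2, hc2, heq2⟩ := hgcl R1 hR1g (w0 (i+1)) hhg' hACR1h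
        have hR2cl : cl R2 := hcl _ _ _ _ hR1cl hhcl' hc2 heq2
        have hACR1D : AC R1 (w0 i) := trAC heq1 hc1 hfD (Commute.refl _)
        have hCR2D : Commute R2 (w0 i) := trAA heq2 hc2 hACR1D hDh.symm'
        have hACR1β : AC R1 β := trCA heq1 hc1 hfβ hACiβ
        have hACR2β : AC R2 β := trAC heq2 hc2 hACR1β hhβ
        obtain ⟨R3, hR3g, c3, hc3, heq3⟩ := hgcl (w0 i) hDg' β hβg hACiβ
        have hR3cl : cl R3 := hcl _ _ _ _ hDcl' hβcl hc3 heq3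
        have hACR3R2 : AC R3 R2 := trCA heq3 hc3 hCR2D.symm hACR2β.symm'
        obtain ⟨y, hyg, c4, hc4, heq4⟩ := hgcl R2 hR2g R3 hR3g hACR3R2.symm'
        have hycl : cl y := hcl _ _ _ _ hR2cl hR3cl hc4 heq4
        have hACR3β : AC R3 β := trAC heq3 hc3 hACiβ (Commute.refl _)
        have hCyβ : Commute y β := trAA heq4 hc4 hACR2β hACR3β
        -- relation of y to a generic element x commuting with (w0 i) appropriately
        have hrel : ∀ x : PMat n, Commute β x →
            (Commute (w0 i) x ∨ AC (w0 i) x) →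
            ((AC (w0 (i-1)) x ∧ Commute (w0 (i+1)) x) ∨
             (Commute (w0 (i-1)) x ∧ AC (w0 (i+1)) x)) → AC y x := by
          intro x hβx hDx hfhx
          rcases hDx with hDx | hDx
          · have hR3x : Commute R3 x := trCC heq3 hc3 hDx hβx
            rcases hfhx with ⟨hfx, hhx⟩ | ⟨hfx, hhx⟩
            · have hR1x : AC R1 x := trAC heq1 hc1 hfx hDx
              have hR2x : AC R2 x := trAC heq2 hc2 hR1x hhx
              exact trAC heq4 hc4 hR2x hR3x
            · have hR1x : Commute R1 x := trCC heq1 hc1 hfx hDx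
              have hR2x : AC R2 x := trCA heq2 hc2 hR1x hhx
              exact trAC heq4 hc4 hR2x hR3x
          · have hR3x : AC R3 x := trAC heq3 hc3 hDx hβx
            rcases hfhx with ⟨hfx, hhx⟩ | ⟨hfx, hhx⟩
            · have hR1x : Commute R1 x := trAA heq1 hc1 hfx hDx
              have hR2x : Commute R2 x := trCC heq2 hc2 hR1x hhx
              exact trCA heq4 hc4 hR2x hR3x
            · have hR1x : AC R1 x := trCA heq1 hc1 hfx hDx
              have hR2x : Commute R2 x := trAA heq2 hc2 hR1x hhx
              exact trCA heq4 hc4 hR2x hR3x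
        have hDdich : ∀ x : PMat n, IsP x → (Commute (w0 i) x ∨ AC (w0 i) x) := by
          intro x hx
          exact isP_dich (hgP _ hDg') hx
        -- case split on position of i
        rcases Nat.lt_or_ge (i+1) k0 with hiright | hiright
        · -- h is interior; right attach to w0 (i+2)
          have hadi2 : AC (w0 (i+1)) (w0 (i+2)) := q3 (i+1) (by omega)
          have hyi2 : AC y (w0 (i+2)) := by
            apply hrel
            · exact (hsolo (i+2) (by omega) (by omega)).symm
            · left; exact q4 i (i+2) (by omega) (by omega)
            · right
              exact ⟨q4 (i-1) (i+2) (by omega) (by omega), hadi2⟩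
          rcases Nat.lt_or_ge 1 i with hileft | hileft
          · -- i ≥ 2 : attach left to w0 (i-2)
            have hyi_2 : AC y (w0 (i-2)) := by
              apply hrel
              · exact (hsolo (i-2) (by omega) (by omega)).symm
              · left; exact (q4 (i-2) i (by omega) (by omega)).symm
              · left
                constructor
                · have h3 := q3 (i-2) (by omega)
                  have e : i - 2 + 1 = i - 1 := by omega
                  rw [e] at h3
                  exact h3.symm'
                · exact (q4 (i-2) (i+1) (by omega) (by omega)).symm
            set k1 := k0 - 2 with hk1
            set w1 : ℕ → PMat n := fun l =>
              if l ≤ i-2 then w0 l else if l = i-1 then y else w0 (l+2) with hw1def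
            have e1 : ∀ l, l ≤ i-2 → w1 l = w0 l := by
              intro l hl
              simp only [hw1def]
              rw [if_pos hl]
            have eY : w1 (i-1) = y := by
              simp only [hw1def]
              rw [if_neg (by omega : ¬ (i-1 ≤ i-2))]
              simp
            have e2 : ∀ l, i-1 < l → w1 l = w0 (l+2) := by
              intro l hl
              simp only [hw1def]
              rw [if_neg (by omega : ¬ (l ≤ i-2)), if_neg (by omega : ¬ (l = i-1))]
            refine ⟨k1, w1, ?_, ?_, ?_, ?_, ?_, ?_⟩
            · intro l hl
              rcases lt_trichotomy l (i-1) with h | h | h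
              · rw [e1 l (by omega)]; exact q1 l (by omega)
              · rw [h, eY]; exact hyg
              · rw [e2 l h]; exact q1 _ (by omega)
            · intro l hl
              rcases lt_trichotomy l (i-1) with h | h | h
              · rw [e1 l (by omega)]; exact q2 l (by omega)
              · rw [h, eY]; exact hycl
              · rw [e2 l h]; exact q2 _ (by omega)
            · intro l hl
              rcases lt_trichotomy l (i-1) with h | h | h
              · rw [e1 l (by omega)]; exact hsolo l (by omega) (by omega)
              · rw [h, eY]; exact hCyβ
              · rw [e2 l h]; exact hsolo _ (by omega) (by omega)
            · intro l hl
              rcases lt_trichotomy (l+1) (i-1) with h | h | h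
              · rw [e1 l (by omega), e1 (l+1) (by omega)]; exact q3 l (by omega)
              · rw [e1 l (by omega), h, eY]
                have : w0 l = w0 (i-2) := by rw [(by omega : l = i-2)]
                rw [this]
                exact hyi_2.symm'
              · rcases Nat.eq_or_lt_of_le (by omega : i-1 ≤ l) with h2 | h2
                · rw [e2 (l+1) (by omega), (by omega : l + 1 + 2 = i + 2),
                    (by omega : l = i - 1), eY]
                  exact hyi2
                · rw [e2 l h2, e2 (l+1) (by omega)]
                  have : l + 2 + 1 = l + 1 + 2 := by omega
                  rw [← this]
                  exact q3 _ (by omega)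
            · rw [e1 0 (by omega)]; exact q5
            · rw [e2 k1 (by omega), (by omega : k1 + 2 = k0)]; exact q6
          · -- i = 1 : left attach via a
            have hieq : i = 1 := by omega
            have hfb1 : w0 (i-1) = b1 := by rw [(by omega : i - 1 = 0)]; exact q5
            have hk03 : 3 ≤ k0 := by omega
            rcases isP_dich (hgP _ hhg') (hgP _ hag) with hha | hha
            · -- Commute h a: use y
              have hya : AC y a := by
                apply hrel a haβ.symm (hDdich a (hgP a hag))
                left
                exact ⟨by rw [hfb1]; exact hab1.symm', hha⟩
              set w1 : ℕ → PMat n := fun l =>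
                if l = 1 then a else if l = 2 then y else w0 l with hw1def
              have ea : w1 1 = a := by simp [hw1def]
              have ey : w1 2 = y := by simp [hw1def]
              have e2' : ∀ l, l ≠ 1 → l ≠ 2 → w1 l = w0 l := by
                intro l h1 h2
                simp only [hw1def]
                rw [if_neg h1, if_neg h2]
              refine ⟨k0, w1, ?_, ?_, ?_, ?_, ?_, ?_⟩
              · intro l hl
                match l, hl with
                | 0, _ => rw [e2' 0 (by omega) (by omega)]; exact q1 0 (by omega)
                | 1, _ => rw [ea]; exact hag
                | 2, _ => rw [ey]; exact hyg
                | (m+3), hm => rw [e2' (m+3) (by omega) (by omega)]; exact q1 _ hm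
              · intro l hl
                match l, hl with
                | 0, _ => rw [e2' 0 (by omega) (by omega)]; exact q2 0 (by omega)
                | 1, _ => rw [ea]; exact hacl
                | 2, _ => rw [ey]; exact hycl
                | (m+3), hm => rw [e2' (m+3) (by omega) (by omega)]; exact q2 _ hm
              · intro l hl
                match l, hl with
                | 0, _ => rw [e2' 0 (by omega) (by omega)]; exact hsolo 0 (by omega) (by omega)
                | 1, _ => rw [ea]; exact haβ
                | 2, _ => rw [ey]; exact hCyβ
                | (m+3), hm =>
                  rw [e2' (m+3) (by omega) (by omega)]
                  exact hsolo _ hm (by omega)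
              · intro l hl
                match l, hl with
                | 0, _ =>
                  rw [e2' 0 (by omega) (by omega), ea, q5]
                  exact hab1.symm'
                | 1, _ => rw [ea, ey]; exact hya.symm'
                | 2, _ =>
                  rw [ey, e2' 3 (by omega) (by omega), (by omega : (3:ℕ) = i + 2)]
                  exact hyi2
                | (m+3), hm =>
                  rw [e2' (m+3) (by omega) (by omega), e2' (m+3+1) (by omega) (by omega)]
                  exact q3 _ hm
              · rw [e2' 0 (by omega) (by omega)]; exact q5
              · rw [e2' k0 (by omega) (by omega)]; exact q6
            · -- AC h a: shortcut b1 ~ a ~ h ~ ...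
              set w1 : ℕ → PMat n := fun l => if l = 1 then a else w0 l with hw1def
              have ea : w1 1 = a := by simp [hw1def]
              have e2' : ∀ l, l ≠ 1 → w1 l = w0 l := by
                intro l h1
                simp only [hw1def]
                rw [if_neg h1]
              refine ⟨k0, w1, ?_, ?_, ?_, ?_, ?_, ?_⟩
              · intro l hl
                by_cases h : l = 1
                · rw [h, ea]; exact hag
                · rw [e2' l h]; exact q1 l hl
              · intro l hl
                by_cases h : l = 1
                · rw [h, ea]; exact hacl
                · rw [e2' l h]; exact q2 l hl
              · intro l hl
                by_cases h : l = 1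
                · rw [h, ea]; exact haβ
                · rw [e2' l h]; exact hsolo l hl (by omega)
              · intro l hl
                match l, hl with
                | 0, _ =>
                  rw [e2' 0 (by omega), ea, q5]
                  exact hab1.symm'
                | 1, _ =>
                  rw [ea, e2' 2 (by omega), (by omega : (2:ℕ) = i + 1)]
                  exact hha.symm'
                | (m+2), hm =>
                  rw [e2' (m+2) (by omega), e2' (m+2+1) (by omega)]
                  exact q3 _ hm
              · rw [e2' 0 (by omega)]; exact q5
              · rw [e2' k0 (by omega)]; exact q6
        · -- i + 1 = k0 : h = b2, right attach via cw
          have hik0 : i + 1 = k0 := by omega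
          have hw0i1 : w0 (i+1) = b2 := by rw [hik0]; exact q6
          rcases isP_dich (hgP _ hfg') (hgP _ hcg) with hfc | hfc
          · -- Commute f cw
            have hycw : AC y cw := by
              apply hrel cw hcβ.symm (hDdich cw (hgP cw hcg))
              right
              exact ⟨hfc, by rw [hw0i1]; exact hcb2.symm'⟩
            rcases Nat.lt_or_ge 1 i with hileft | hileft
            · -- i ≥ 2 : walk w0 0 .. w0 (i-2), y, cw, b2
              have hyi_2 : AC y (w0 (i-2)) := by
                apply hrel
                · exact (hsolo (i-2) (by omega) (by omega)).symm
                · left; exact (q4 (i-2) i (by omega) (by omega)).symm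
                · left
                  constructor
                  · have h3 := q3 (i-2) (by omega)
                    have e : i - 2 + 1 = i - 1 := by omega
                    rw [e] at h3
                    exact h3.symm'
                  · exact (q4 (i-2) (i+1) (by omega) (by omega)).symm
              set w1 : ℕ → PMat n := fun l =>
                if l ≤ i-2 then w0 l else if l = i-1 then y else if l = i then cw
                else b2 with hw1def
              have e1 : ∀ l, l ≤ i-2 → w1 l = w0 l := by
                intro l hl
                simp only [hw1def]
                rw [if_pos hl]
              have eY : w1 (i-1) = y := by
                simp only [hw1def]
                rw [if_neg (by omega : ¬ (i-1 ≤ i-2))]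
                simp
              have eC : w1 i = cw := by
                simp only [hw1def]
                rw [if_neg (by omega : ¬ (i ≤ i-2)), if_neg (by omega : ¬ (i = i-1))]
                simp
              have eB : w1 (i+1) = b2 := by
                simp only [hw1def]
                rw [if_neg (by omega : ¬ (i+1 ≤ i-2)), if_neg (by omega : ¬ (i+1 = i-1)),
                  if_neg (by omega : ¬ (i+1 = i))]
              refine ⟨k0, w1, ?_, ?_, ?_, ?_, ?_, ?_⟩
              · intro l hl
                rcases lt_trichotomy l (i-1) with h | h | h
                · rw [e1 l (by omega)]; exact q1 l (by omega)
                · rw [h, eY]; exact hyg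
                · rcases lt_trichotomy l i with h2 | h2 | h2
                  · omega
                  · rw [h2, eC]; exact hcg
                  · rw [(by omega : l = i + 1), eB, ← q6]; exact q1 k0 (le_refl _)
              · intro l hl
                rcases lt_trichotomy l (i-1) with h | h | h
                · rw [e1 l (by omega)]; exact q2 l (by omega)
                · rw [h, eY]; exact hycl
                · rcases lt_trichotomy l i with h2 | h2 | h2
                  · omega
                  · rw [h2, eC]; exact hccl
                  · rw [(by omega : l = i + 1), eB]
                    rw [← q6, ← hik0]; exact q2 (i+1) (by omega)
              · intro l hl
                rcases lt_trichotomy l (i-1) with h | h | h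
                · rw [e1 l (by omega)]; exact hsolo l (by omega) (by omega)
                · rw [h, eY]; exact hCyβ
                · rcases lt_trichotomy l i with h2 | h2 | h2
                  · omega
                  · rw [h2, eC]; exact hcβ
                  · rw [(by omega : l = i + 1), eB]; exact hb2β
              · intro l hl
                rcases lt_trichotomy (l+1) (i-1) with h | h | h
                · rw [e1 l (by omega), e1 (l+1) (by omega)]; exact q3 l (by omega)
                · rw [e1 l (by omega), h, eY, (by omega : l = i - 2)]
                  exact hyi_2.symm'
                · rcases lt_trichotomy (l+1) i with h2 | h2 | h2
                  · omega
                  · rw [h2, eC, (by omega : l = i - 1), eY]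
                    exact hycw
                  · rw [(by omega : l + 1 = i + 1), eB, (by omega : l = i), eC]
                    exact hcb2
              · rw [e1 0 (by omega)]; exact q5
              · rw [(by omega : k0 = i + 1), eB]
              -- done
            · -- i = 1, k0 = 2 : f = b1, h = b2
              have hieq : i = 1 := by omega
              have hfb1 : w0 (i-1) = b1 := by rw [(by omega : i - 1 = 0)]; exact q5
              rcases isP_dich (hgP _ hhg') (hgP _ hag) with hha | hha
              · -- Commute b2 a : walk b1, a, y, cw, b2
                have hya : AC y a := by
                  apply hrel a haβ.symm (hDdich a (hgP a hag))
                  left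
                  exact ⟨by rw [hfb1]; exact hab1.symm', hha⟩
                set w1 : ℕ → PMat n := fun l =>
                  if l = 0 then b1 else if l = 1 then a else if l = 2 then y
                  else if l = 3 then cw else b2 with hw1def
                have ew : w1 0 = b1 ∧ w1 1 = a ∧ w1 2 = y ∧ w1 3 = cw ∧ w1 4 = b2 := by
                  refine ⟨?_, ?_, ?_, ?_, ?_⟩ <;> simp [hw1def]
                obtain ⟨ee0, ee1, ee2, ee3, ee4⟩ := ew
                refine ⟨4, w1, ?_, ?_, ?_, ?_, ee0, ee4⟩
                · intro l hl
                  match l, hl with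
                  | 0, _ => rw [ee0, ← q5]; exact q1 0 (by omega)
                  | 1, _ => rw [ee1]; exact hag
                  | 2, _ => rw [ee2]; exact hyg
                  | 3, _ => rw [ee3]; exact hcg
                  | 4, _ => rw [ee4, ← q6]; exact q1 k0 (le_refl _)
                · intro l hl
                  match l, hl with
                  | 0, _ => rw [ee0, ← q5]; exact q2 0 (by omega)
                  | 1, _ => rw [ee1]; exact hacl
                  | 2, _ => rw [ee2]; exact hycl
                  | 3, _ => rw [ee3]; exact hccl
                  | 4, _ => rw [ee4, ← q6]; exact q2 k0 (le_refl _)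
                · intro l hl
                  match l, hl with
                  | 0, _ => rw [ee0]; exact hb1β
                  | 1, _ => rw [ee1]; exact haβ
                  | 2, _ => rw [ee2]; exact hCyβ
                  | 3, _ => rw [ee3]; exact hcβ
                  | 4, _ => rw [ee4]; exact hb2β
                · intro l hl
                  match l, hl with
                  | 0, _ => rw [ee0, ee1]; exact hab1.symm'
                  | 1, _ => rw [ee1, ee2]; exact hya.symm'
                  | 2, _ =>
                    rw [ee2, ee3]
                    exact hycw
                  | 3, _ => rw [ee3, ee4]; exact hcb2
              · -- AC b2 a : walk b1, a, b2
                set w1 : ℕ → PMat n := fun l =>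
                  if l = 0 then b1 else if l = 1 then a else b2 with hw1def
                have ew : w1 0 = b1 ∧ w1 1 = a ∧ w1 2 = b2 := by
                  refine ⟨?_, ?_, ?_⟩ <;> simp [hw1def]
                obtain ⟨ee0, ee1, ee2⟩ := ew
                refine ⟨2, w1, ?_, ?_, ?_, ?_, ee0, ee2⟩
                · intro l hl
                  match l, hl with
                  | 0, _ => rw [ee0, ← q5]; exact q1 0 (by omega)
                  | 1, _ => rw [ee1]; exact hag
                  | 2, _ => rw [ee2, ← q6]; exact q1 k0 (le_refl _)
                · intro l hl
                  match l, hl with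
                  | 0, _ => rw [ee0, ← q5]; exact q2 0 (by omega)
                  | 1, _ => rw [ee1]; exact hacl
                  | 2, _ => rw [ee2, ← q6]; exact q2 k0 (le_refl _)
                · intro l hl
                  match l, hl with
                  | 0, _ => rw [ee0]; exact hb1β
                  | 1, _ => rw [ee1]; exact haβ
                  | 2, _ => rw [ee2]; exact hb2β
                · intro l hl
                  match l, hl with
                  | 0, _ => rw [ee0, ee1]; exact hab1.symm'
                  | 1, _ =>
                    rw [ee1, ee2]
                    have : AC (w0 (i+1)) a := hha
                    rw [hw0i1] at this
                    exact this.symm'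
          · -- AC f cw : walk w0 0 .. w0 (i-1), cw, b2
            set w1 : ℕ → PMat n := fun l =>
              if l ≤ i-1 then w0 l else if l = i then cw else b2 with hw1def
            have e1 : ∀ l, l ≤ i-1 → w1 l = w0 l := by
              intro l hl
              simp only [hw1def]
              rw [if_pos hl]
            have eC : w1 i = cw := by
              simp only [hw1def]
              rw [if_neg (by omega : ¬ (i ≤ i-1))]
              simp
            have eB : w1 (i+1) = b2 := by
              simp only [hw1def]
              rw [if_neg (by omega : ¬ (i+1 ≤ i-1)), if_neg (by omega : ¬ (i+1 = i))]
            refine ⟨k0, w1, ?_, ?_, ?_, ?_, ?_, ?_⟩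
            · intro l hl
              rcases lt_trichotomy l i with h | h | h
              · rw [e1 l (by omega)]; exact q1 l (by omega)
              · rw [h, eC]; exact hcg
              · rw [(by omega : l = i + 1), eB, ← q6]; exact q1 k0 (le_refl _)
            · intro l hl
              rcases lt_trichotomy l i with h | h | h
              · rw [e1 l (by omega)]; exact q2 l (by omega)
              · rw [h, eC]; exact hccl
              · rw [(by omega : l = i + 1), eB, ← q6]; exact q2 k0 (le_refl _)
            · intro l hl
              rcases lt_trichotomy l i with h | h | h
              · rw [e1 l (by omega)]; exact hsolo l (by omega) (by omega)
              · rw [h, eC]; exact hcβ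
              · rw [(by omega : l = i + 1), eB]; exact hb2β
            · intro l hl
              rcases lt_trichotomy (l+1) i with h | h | h
              · rw [e1 l (by omega), e1 (l+1) (by omega)]; exact q3 l (by omega)
              · rw [e1 l (by omega), h, eC, (by omega : l = i - 1)]
                exact hfc
              · rw [(by omega : l + 1 = i + 1), eB, (by omega : l = i), eC]
                exact hcb2
            · rw [e1 0 (by omega)]; exact q5
            · rw [(by omega : k0 = i + 1), eB]

/-- iterate cleaning over all pre-b's, then extract the interval product z -/
lemma existsZ (hgP : ∀ P ∈ g, IsP P)
    (hgcl : ∀ P ∈ g, ∀ Q ∈ g, AC P Q → ∃ R ∈ g, ∃ c : ℂ, c ≠ 0 ∧ P * Q = c • R)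
    (m : ℕ) (bb : ℕ → PMat n) (u v a cw : PMat n)
    (hbbg : ∀ t < m, bb t ∈ g)
    (hbbc : ∀ s < m, ∀ t < m, Commute (bb s) (bb t))
    (hug : u ∈ g) (hvg : v ∈ g)
    (huv : Commute u v) (hunev : u ≠ v)
    (hubb : ∀ t < m, Commute u (bb t)) (hvbb : ∀ t < m, Commute v (bb t))
    (hag : a ∈ g) (habb : ∀ t < m, Commute a (bb t)) (hau : AC a u)
    (hcg : cw ∈ g) (hcbb : ∀ t < m, Commute cw (bb t)) (hcv : AC cw v)
    (hcu : Commute cw u)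
    (k : ℕ) (w : ℕ → PMat n) (hw1 : ∀ i ≤ k, w i ∈ g)
    (hw3 : ∀ i < k, AC (w i) (w (i+1)))
    (h0 : w 0 = u) (hk : w k = v) :
    ∃ z ∈ g, (∀ t < m, Commute z (bb t)) ∧ AC z u ∧ AC z v := by
  -- Step 1: clean walk
  have step1 : ∀ j ≤ m, ∃ k', ∃ w' : ℕ → PMat n,
      (∀ i ≤ k', w' i ∈ g) ∧ (∀ i ≤ k', ∀ t < j, Commute (w' i) (bb t)) ∧
      (∀ i < k', AC (w' i) (w' (i+1))) ∧ w' 0 = u ∧ w' k' = v := by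
    intro j
    induction j with
    | zero =>
      intro _
      exact ⟨k, w, hw1, fun i _ t ht => absurd ht (Nat.not_lt_zero t), hw3, h0, hk⟩
    | succ j ih =>
      intro hj
      obtain ⟨k', w', p1, p2, p3, p4, p5⟩ := ih (by omega)
      have hjm : j < m := by omega
      set cl' : PMat n → Prop := fun x => ∀ t < j, Commute x (bb t) with hcl'
      have hclT : ∀ x y R : PMat n, ∀ c : ℂ, cl' x → cl' y → c ≠ 0 → x * y = c • R → cl' R := by
        intro x y R c hx hy hc heq t ht
        exact trCC heq hc (hx t ht) (hy t ht)
      obtain ⟨k'', w'', r1, r2, r3, r4, r5, r6⟩ :=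
        cleanStep g cl' hgP hgcl hclT (bb j) u v a cw
          (hbbg j hjm) (fun t ht => hbbc j hjm t (by omega))
          (hubb j hjm) (hvbb j hjm)
          hag (fun t ht => habb t (by omega)) (habb j hjm) hau
          hcg (fun t ht => hcbb t (by omega)) (hcbb j hjm) hcv hcu
          k' w' p1 p2 p3 p4 p5
      refine ⟨k'', w'', r1, ?_, r4, r5, r6⟩
      intro i hi t ht
      rcases Nat.lt_or_ge t j with h | h
      · exact r2 i hi t h
      · have : t = j := by omega
        rw [this]
        exact r3 i hi
  obtain ⟨k', w', p1, p2, p3, p4, p5⟩ := step1 m (le_refl m)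
  -- Step 2: chord-free
  set cl' : PMat n → Prop := fun x => ∀ t < m, Commute x (bb t) with hcl'
  obtain ⟨k0, hk0le, w0, q1, q2, q3, q4, q5, q6⟩ :=
    chordfree_reduce g cl' hgP k' w' p1 p2 p3
  rw [p4] at q5
  rw [p5] at q6
  -- Step 3: degenerate lengths
  rcases Nat.lt_or_ge k0 2 with hk0 | hk0
  · interval_cases k0
    · exact absurd (q5 ▸ q6 : u = v) hunev
    · have hACuv : AC u v := by
        have := q3 0 (by omega)
        rwa [q5, (show (0:ℕ)+1 = 1 from rfl), q6] at this
      exact absurd ⟨huv, hACuv⟩ (not_comm_and_AC (hgP u hug) (hgP v hvg))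
  -- Step 4: interval product over [1, k0-1]
  obtain ⟨T, hTg, hTcl, hC1, hC2, hC3⟩ :=
    IPCore g cl' hgP hgcl (fun x y R c hx hy hc heq t ht => trCC heq hc (hx t ht) (hy t ht))
      k0 w0 q1 q2 q3 q4 1 (k0 - 1) (by omega) (by omega)
  have hTu : AC T u := by
    rw [← q5]
    apply hC1
    · exact (q3 0 (by omega)).symm'
    · intro s hs1 hs2
      exact (q4 0 s (by omega) (by omega)).symm
  have hTv : AC T v := by
    have := hC3 (by omega)
    rwa [(by omega : k0 - 1 + 1 = k0), q6] at this
  exact ⟨T, hTg, hTcl, hTu, hTv⟩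


end walks

section main
variable {n : ℕ}

lemma walk_of_reachable (S : Finset (PMat n)) (hSP : ∀ P ∈ S, IsP P)
    (x y : ((S : Set (PMat n)))) (h : (frustGraph (S : Set (PMat n))).Reachable x y) :
    ∃ k, ∃ w : ℕ → PMat n, (∀ i ≤ k, w i ∈ S) ∧ (∀ i < k, AC (w i) (w (i+1))) ∧
      w 0 = x.val ∧ w k = y.val := by
  obtain ⟨p⟩ := h
  induction p with
  | @nil v =>
    refine ⟨0, fun _ => v.val, ?_, ?_, rfl, rfl⟩
    · intro i _
      exact Finset.mem_coe.mp v.property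
    · intro i hi
      omega
  | @cons x' u' y' hadj p ih =>
    obtain ⟨k, w, m1, m2, m3, m4⟩ := ih
    have hx'S : x'.val ∈ S := Finset.mem_coe.mp x'.property
    have hu'S : u'.val ∈ S := Finset.mem_coe.mp u'.property
    have hACxu : AC x'.val u'.val :=
      (lie_ne_iff (hSP _ hx'S) (hSP _ hu'S)).mp (show x' ≠ u' ∧ ⁅(x' : PMat n), (u' : PMat n)⁆ ≠ 0 from hadj).2
    refine ⟨k+1, fun i => if i = 0 then x'.val else w (i-1), ?_, ?_, by simp, ?_⟩
    · intro i hi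
      by_cases h0 : i = 0
      · simp only [h0, if_pos rfl]; exact hx'S
      · simp only [if_neg h0]; exact m1 (i-1) (by omega)
    · intro i hi
      by_cases h0 : i = 0
      · subst h0
        simp only [if_pos rfl, if_neg (by omega : ¬ (0+1 = 0))]
        rw [(by omega : (0:ℕ)+1-1 = 0), m3]
        exact hACxu
      · simp only [if_neg h0, if_neg (by omega : ¬ (i+1 = 0))]
        rw [(by omega : i + 1 - 1 = (i-1) + 1)]
        exact m2 (i-1) (by omega)
    · simp only [if_neg (by omega : ¬ (k+1 = 0))]
      rw [(by omega : k + 1 - 1 = k)]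
      exact m4

/-- **Lemma A9.**  For a Cartan decomposition `g = k ⊕ m` of a Pauli dynamical
Lie algebra with pairwise commuting `b 0, …, b (nb-1) ∈ Mb` in one connected
component of the frustration graph:  if the successive fragments
`k^{r-1}_{0…r-2}` and `k^{r}_{0…r-1}` are both nonempty, then
`|k^{r-1}_{0…r-2}| > |k^{r}_{0…r-1}|`.  (Indices are `0`-based.) -/
theorem successive_nonempty_fragments_strictly_decrease
    (n nb : ℕ) (Kb Mb : Finset (Matrix (Fin n → Fin 2) (Fin n → Fin 2) ℂ))
    (hPauli : ∀ P ∈ Kb ∪ Mb, ∃ f : Fin n → Fin 4, P = PauliString n f)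
    (hKK : ∀ P ∈ Kb, ∀ Q ∈ Kb, ⁅P, Q⁆ ≠ 0 → ∃ R ∈ Kb, ∃ c : ℂ, c ≠ 0 ∧ P * Q = c • R)
    (hMM : ∀ P ∈ Mb, ∀ Q ∈ Mb, ⁅P, Q⁆ ≠ 0 → ∃ R ∈ Kb, ∃ c : ℂ, c ≠ 0 ∧ P * Q = c • R)
    (hKM : ∀ P ∈ Kb, ∀ Q ∈ Mb, ⁅P, Q⁆ ≠ 0 → ∃ R ∈ Mb, ∃ c : ℂ, c ≠ 0 ∧ P * Q = c • R)
    (b : ℕ → Matrix (Fin n → Fin 2) (Fin n → Fin 2) ℂ)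
    (hbM : ∀ j < nb, b j ∈ Mb)
    (hbcomm : ∀ i < nb, ∀ j < nb, ⁅b i, b j⁆ = 0)
    (hconn : ∀ i, ∀ (hi : i < nb), ∀ j, ∀ (hj : j < nb),
      (frustGraph ((Kb ∪ Mb : Finset _) : Set _)).Reachable
        ⟨b i, by exact_mod_cast Finset.mem_union_right Kb (hbM i hi)⟩
        ⟨b j, by exact_mod_cast Finset.mem_union_right Kb (hbM j hj)⟩)
    (r : ℕ) (hr1 : 1 ≤ r) (hr : r < nb)
    (hne1 : (Kb.filter (fun p =>
      (∀ j < r - 1, ⁅p, b j⁆ = 0) ∧ ⁅p, b (r - 1)⁆ ≠ 0)).Nonempty)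
    (hne2 : (Kb.filter (fun p =>
      (∀ j < r, ⁅p, b j⁆ = 0) ∧ ⁅p, b r⁆ ≠ 0)).Nonempty) :
    (Kb.filter (fun p =>
        (∀ j < r - 1, ⁅p, b j⁆ = 0) ∧ ⁅p, b (r - 1)⁆ ≠ 0)).card >
      (Kb.filter (fun p => (∀ j < r, ⁅p, b j⁆ = 0) ∧ ⁅p, b r⁆ ≠ 0)).card := by
  classical
  set g : Finset (PMat n) := Kb ∪ Mb with hgdef
  have hgP : ∀ P ∈ g, IsP P := fun P hP => hPauli P hP
  have hKP : ∀ P ∈ Kb, IsP P := fun P h => hgP P (Finset.mem_union_left _ h)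
  have hMP : ∀ P ∈ Mb, IsP P := fun P h => hgP P (Finset.mem_union_right _ h)
  have hgcl : ∀ P ∈ g, ∀ Q ∈ g, AC P Q → ∃ R ∈ g, ∃ c : ℂ, c ≠ 0 ∧ P * Q = c • R := by
    intro P hP Q hQ hAC
    have hPp := hgP P hP
    have hQp := hgP Q hQ
    have hlie : ⁅P, Q⁆ ≠ 0 := (lie_ne_iff hPp hQp).mpr hAC
    rcases Finset.mem_union.mp hP with hPK | hPM <;> rcases Finset.mem_union.mp hQ with hQK | hQM
    · obtain ⟨R, hR, c, hc, heq⟩ := hKK P hPK Q hQK hlie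
      exact ⟨R, Finset.mem_union_left _ hR, c, hc, heq⟩
    · obtain ⟨R, hR, c, hc, heq⟩ := hKM P hPK Q hQM hlie
      exact ⟨R, Finset.mem_union_right _ hR, c, hc, heq⟩
    · obtain ⟨R, hR, c, hc, heq⟩ := hKM Q hQK P hPM ((lie_ne_iff hQp hPp).mpr hAC.symm')
      refine ⟨R, Finset.mem_union_right _ hR, -c, neg_ne_zero.mpr hc, ?_⟩
      rw [hAC, heq, neg_smul]
    · obtain ⟨R, hR, c, hc, heq⟩ := hMM P hPM Q hQM hlie
      exact ⟨R, Finset.mem_union_left _ hR, c, hc, heq⟩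
  -- basic b facts
  have hbMb : ∀ j ≤ r, b j ∈ Mb := fun j hj => hbM j (by omega)
  have hbP : ∀ j ≤ r, IsP (b j) := fun j hj => hMP _ (hbMb j hj)
  have hbb : ∀ i ≤ r, ∀ j ≤ r, Commute (b i) (b j) := fun i hi j hj =>
    lie_zero_iff.mp (hbcomm i (by omega) j (by omega))
  -- witnesses
  obtain ⟨a, haB⟩ := hne1
  obtain ⟨haK, haC, haA⟩ :
      a ∈ Kb ∧ (∀ j < r - 1, ⁅a, b j⁆ = 0) ∧ ⁅a, b (r-1)⁆ ≠ 0 := by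
    have := Finset.mem_filter.mp haB
    exact ⟨this.1, this.2.1, this.2.2⟩
  have haP : IsP a := hKP a haK
  have hau : AC a (b (r-1)) := (lie_ne_iff haP (hbP (r-1) (by omega))).mp haA
  have habb : ∀ t < r - 1, Commute a (b t) := fun t ht => lie_zero_iff.mp (haC t ht)
  obtain ⟨cw, hcB⟩ := hne2
  obtain ⟨hcK, hcC, hcA⟩ :
      cw ∈ Kb ∧ (∀ j < r, ⁅cw, b j⁆ = 0) ∧ ⁅cw, b r⁆ ≠ 0 := by
    have := Finset.mem_filter.mp hcB
    exact ⟨this.1, this.2.1, this.2.2⟩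
  have hcP : IsP cw := hKP cw hcK
  have hcv : AC cw (b r) := (lie_ne_iff hcP (hbP r (le_refl r))).mp hcA
  have hcu : Commute cw (b (r-1)) := lie_zero_iff.mp (hcC (r-1) (by omega))
  have hcbb : ∀ t < r - 1, Commute cw (b t) := fun t ht => lie_zero_iff.mp (hcC t (by omega))
  have hunev : b (r-1) ≠ b r := by
    intro hEq
    apply not_comm_and_AC hcP (hbP (r-1) (by omega))
    exact ⟨hcu, by rw [hEq]; exact hcv⟩
  -- initial walk
  obtain ⟨k, w, hw1, hw3, hwa, hwb⟩ :=
    walk_of_reachable g hgP _ _ (hconn (r-1) (by omega) r hr)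
  -- obtain z
  obtain ⟨z, hzg, hzcl, hzu, hzv⟩ :=
    existsZ g hgP hgcl (r-1) b (b (r-1)) (b r) a cw
      (fun t ht => Finset.mem_union_right _ (hbMb t (by omega)))
      (fun s hs t ht => hbb s (by omega) t (by omega))
      (Finset.mem_union_right _ (hbMb (r-1) (by omega)))
      (Finset.mem_union_right _ (hbMb r (le_refl r)))
      (hbb (r-1) (by omega) r (le_refl r)) hunev
      (fun t ht => hbb (r-1) (by omega) t (by omega))
      (fun t ht => hbb r (le_refl r) t (by omega))
      (Finset.mem_union_left _ haK) habb hau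
      (Finset.mem_union_left _ hcK) hcbb hcv hcu
      k w hw1 hw3 hwa hwb
  -- q0 in Kb with same relations
  obtain ⟨q0, hq0K, hq0bt, hq0b1, hq0b2⟩ :
      ∃ q0 ∈ Kb, (∀ t < r-1, Commute q0 (b t)) ∧ AC q0 (b (r-1)) ∧ AC q0 (b r) := by
    rcases Finset.mem_union.mp hzg with hzK | hzM
    · exact ⟨z, hzK, hzcl, hzu, hzv⟩
    · have hlie : ⁅z, b (r-1)⁆ ≠ 0 :=
        (lie_ne_iff (hgP z hzg) (hbP (r-1) (by omega))).mpr hzu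
      obtain ⟨R, hRK, c, hc, heq⟩ := hMM z hzM (b (r-1)) (hbMb (r-1) (by omega)) hlie
      refine ⟨R, hRK, ?_, ?_, ?_⟩
      · intro t ht
        exact trCC heq hc (hzcl t ht) (hbb (r-1) (by omega) t (by omega))
      · exact trAC heq hc hzu (Commute.refl _)
      · exact trAC heq hc hzv (hbb (r-1) (by omega) r (le_refl r))
  have hq0P : IsP q0 := hKP q0 hq0K
  -- q'' = R2
  have hlie1 : ⁅q0, b (r-1)⁆ ≠ 0 := (lie_ne_iff hq0P (hbP (r-1) (by omega))).mpr hq0b1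
  obtain ⟨R1, hR1M, c1, hc1, heq1⟩ := hKM q0 hq0K (b (r-1)) (hbMb (r-1) (by omega)) hlie1
  have hR1b2 : AC R1 (b r) := trAC heq1 hc1 hq0b2 (hbb (r-1) (by omega) r (le_refl r))
  have hR1b1 : AC R1 (b (r-1)) := trAC heq1 hc1 hq0b1 (Commute.refl _)
  have hR1bt : ∀ t < r-1, Commute R1 (b t) := fun t ht =>
    trCC heq1 hc1 (hq0bt t ht) (hbb (r-1) (by omega) t (by omega))
  have hR1q0 : AC R1 q0 := trCA heq1 hc1 (Commute.refl _) hq0b1.symm'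
  have hlie2 : ⁅R1, b r⁆ ≠ 0 := (lie_ne_iff (hMP R1 hR1M) (hbP r (le_refl r))).mpr hR1b2
  obtain ⟨R2, hR2K, c2, hc2, heq2⟩ := hMM R1 hR1M (b r) (hbMb r (le_refl r)) hlie2
  have hR2P : IsP R2 := hKP R2 hR2K
  have hR2b1 : AC R2 (b (r-1)) := trAC heq2 hc2 hR1b1 (hbb r (le_refl r) (r-1) (by omega))
  have hR2b2 : AC R2 (b r) := trAC heq2 hc2 hR1b2 (Commute.refl _)
  have hR2bt : ∀ t < r-1, Commute R2 (b t) := fun t ht =>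
    trCC heq2 hc2 (hR1bt t ht) (hbb r (le_refl r) t (by omega))
  have hR2q0 : Commute R2 q0 := trAA heq2 hc2 hR1q0 hq0b2.symm'
  -- counting sets
  set PA : PMat n → Prop := fun p => (∀ j < r - 1, ⁅p, b j⁆ = 0) ∧ ⁅p, b (r-1)⁆ ≠ 0 with hPA
  set A : Finset (PMat n) := Kb.filter PA with hA
  set B : Finset (PMat n) :=
    Kb.filter (fun p => (∀ j < r, ⁅p, b j⁆ = 0) ∧ ⁅p, b r⁆ ≠ 0) with hB
  set A0 : Finset (PMat n) := A.filter (fun p => ⁅p, b r⁆ = 0) with hA0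
  set D' : Finset (PMat n) := A.filter (fun p => ¬ (⁅p, b r⁆ = 0)) with hD'
  have hsplit : A0.card + D'.card = A.card :=
    Finset.card_filter_add_card_filter_not (fun p => ⁅p, b r⁆ = 0)
  have hq0D : q0 ∈ D' := by
    rw [hD', Finset.mem_filter, hA, Finset.mem_filter]
    refine ⟨⟨hq0K, ?_, ?_⟩, ?_⟩
    · intro j hj; exact lie_zero_iff.mpr (hq0bt j hj)
    · exact (lie_ne_iff hq0P (hbP (r-1) (by omega))).mpr hq0b1
    · exact (lie_ne_iff hq0P (hbP r (le_refl r))).mpr hq0b2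
  have hD1 : 1 ≤ D'.card := Finset.card_pos.mpr ⟨q0, hq0D⟩
  -- injection from B to A0
  have HF : ∀ p : PMat n, ∃ R : PMat n, p ∈ B →
      R ∈ A0 ∧ ∃ c : ℂ, c ≠ 0 ∧
        ((AC p q0 ∧ p * q0 = c • R) ∨ (Commute p q0 ∧ p * R2 = c • R)) := by
    intro p
    by_cases hpB : p ∈ B
    swap
    · exact ⟨0, fun h => absurd h hpB⟩
    obtain ⟨hpK, hpC, hpA⟩ :
        p ∈ Kb ∧ (∀ j < r, ⁅p, b j⁆ = 0) ∧ ⁅p, b r⁆ ≠ 0 := by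
      have := Finset.mem_filter.mp hpB
      exact ⟨this.1, this.2.1, this.2.2⟩
    have hpP : IsP p := hKP p hpK
    have hpb2 : AC p (b r) := (lie_ne_iff hpP (hbP r (le_refl r))).mp hpA
    have hpb1 : Commute p (b (r-1)) := lie_zero_iff.mp (hpC (r-1) (by omega))
    have hpbt : ∀ t < r-1, Commute p (b t) := fun t ht => lie_zero_iff.mp (hpC t (by omega))
    rcases isP_dich hpP hq0P with hpq | hpq
    · -- commute with q0: use R2
      have hR1p : Commute R1 p := trCC heq1 hc1 hpq.symm hpb1.symm
      have hR2p : AC R2 p := trCA heq2 hc2 hR1p hpb2.symm'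
      have hlieP : ⁅p, R2⁆ ≠ 0 := (lie_ne_iff hpP hR2P).mpr hR2p.symm'
      obtain ⟨R, hRK, c, hc, heq⟩ := hKK p hpK R2 hR2K hlieP
      refine ⟨R, fun _ => ⟨?_, c, hc, Or.inr ⟨hpq, heq⟩⟩⟩
      rw [hA0, Finset.mem_filter, hA, Finset.mem_filter]
      refine ⟨⟨hRK, ?_, ?_⟩, ?_⟩
      · intro j hj
        exact lie_zero_iff.mpr (trCC heq hc (hpbt j hj) (hR2bt j hj))
      · exact (lie_ne_iff (hKP R hRK) (hbP (r-1) (by omega))).mpr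
          (trCA heq hc hpb1 hR2b1)
      · exact lie_zero_iff.mpr (trAA heq hc hpb2 hR2b2)
    · -- anticommute with q0
      have hlieP : ⁅p, q0⁆ ≠ 0 := (lie_ne_iff hpP hq0P).mpr hpq
      obtain ⟨R, hRK, c, hc, heq⟩ := hKK p hpK q0 hq0K hlieP
      refine ⟨R, fun _ => ⟨?_, c, hc, Or.inl ⟨hpq, heq⟩⟩⟩
      rw [hA0, Finset.mem_filter, hA, Finset.mem_filter]
      refine ⟨⟨hRK, ?_, ?_⟩, ?_⟩
      · intro j hj
        exact lie_zero_iff.mpr (trCC heq hc (hpbt j hj) (hq0bt j hj))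
      · exact (lie_ne_iff (hKP R hRK) (hbP (r-1) (by omega))).mpr
          (trCA heq hc hpb1 hq0b1)
      · exact lie_zero_iff.mpr (trAA heq hc hpb2 hq0b2)
  choose F hF using HF
  have hmaps : ∀ p ∈ B, F p ∈ A0 := fun p hp => (hF p hp).1
  have hq0sq : q0 * q0 = 1 := isP_sq hq0P
  have hR2sq : R2 * R2 = 1 := isP_sq hR2P
  have hinj : Set.InjOn F B := by
    intro p1 hp1 p2 hp2 hFeq
    have h1 := hF p1 hp1
    have h2 := hF p2 hp2
    obtain ⟨_, d1, hd1, hcase1⟩ := h1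
    obtain ⟨_, d2, hd2, hcase2⟩ := h2
    have hp1K : p1 ∈ Kb := (Finset.mem_filter.mp hp1).1
    have hp2K : p2 ∈ Kb := (Finset.mem_filter.mp hp2).1
    have hp1P : IsP p1 := hKP _ hp1K
    have hp2P : IsP p2 := hKP _ hp2K
    have hFP : IsP (F p1) := hKP _ (Finset.mem_filter.mp ((Finset.mem_filter.mp (hmaps p1 hp1)).1)).1
    -- helper to recover p from p * q' = c • R with q' squaring to 1
    have hrec : ∀ (p q' : PMat n) (d : ℂ), q' * q' = 1 → p * q' = d • (F p1) →
        p = d • (F p1 * q') := by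
      intro p q' d hsq heq
      have : p * q' * q' = (d • (F p1)) * q' := by rw [heq]
      rwa [mul_assoc, hsq, mul_one, Matrix.smul_mul] at this
    rcases hcase1 with ⟨ht1, he1⟩ | ⟨ht1, he1⟩ <;> rcases hcase2 with ⟨ht2, he2⟩ | ⟨ht2, he2⟩
    · -- both q0
      have e1 : p1 = d1 • (F p1 * q0) := hrec p1 q0 d1 hq0sq he1
      have e2 : p2 = d2 • (F p1 * q0) := hrec p2 q0 d2 hq0sq (hFeq ▸ he2)
      have : p1 = (d1 * d2⁻¹) • p2 := by
        rw [e1, e2, smul_smul, mul_assoc, inv_mul_cancel₀ hd2, mul_one]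
      exact isP_rigid hp1P hp2P (mul_ne_zero hd1 (inv_ne_zero hd2)) this
    · -- p1 via q0 (AC), p2 via R2 (Commute)
      exfalso
      have hACRq0 : AC (F p1) q0 := trAC he1 hd1 ht1 (Commute.refl _)
      have hCRq0 : Commute (F p1) q0 := by
        rw [hFeq]
        exact trCC he2 hd2 ht2 hR2q0
      exact not_comm_and_AC hFP hq0P ⟨hCRq0, hACRq0⟩
    · exfalso
      have hACRq0 : AC (F p1) q0 := by
        rw [hFeq]
        exact trAC he2 hd2 ht2 (Commute.refl _)
      have hCRq0 : Commute (F p1) q0 := trCC he1 hd1 ht1 hR2q0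
      exact not_comm_and_AC hFP hq0P ⟨hCRq0, hACRq0⟩
    · -- both R2
      have e1 : p1 = d1 • (F p1 * R2) := hrec p1 R2 d1 hR2sq he1
      have e2 : p2 = d2 • (F p1 * R2) := hrec p2 R2 d2 hR2sq (hFeq ▸ he2)
      have : p1 = (d1 * d2⁻¹) • p2 := by
        rw [e1, e2, smul_smul, mul_assoc, inv_mul_cancel₀ hd2, mul_one]
      exact isP_rigid hp1P hp2P (mul_ne_zero hd1 (inv_ne_zero hd2)) this
  have hcard : B.card ≤ A0.card := Finset.card_le_card_of_injOn F hmaps hinj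
  omega

end main
end
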